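/- arXiv:2312.05620 — 6 statements merged into one kernel-verified Lean document; each statement's English description precedes it below -/
import Mathlib

section
/- If G is a k-regular graph (k ≥ 3) with even girth g, then the number of vertices of G is at least 2 ∑_{i=0}^{(g-2)/2} (k-1)^i = (2(k-1)^{g/2} - 2)/(k-2). -/
open SimpleGraph Finset

set_option linter.unusedSectionVars false
namespace MooreAux

variable {V : Type*} [DecidableEq V] {G : SimpleGraph V}

lemma concat_isPath_iff {u v w : V} (p : G.Walk u v) (h : G.Adj v w) :
    (p.concat h).IsPath ↔ p.IsPath ∧ w ∉ p.support := by
  rw [← Walk.isPath_reverse_iff, Walk.reverse_concat, Walk.cons_isPath_iff,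
    Walk.isPath_reverse_iff, Walk.support_reverse, List.mem_reverse]

lemma dist_add_dist_le {a b z : V} (p : G.Walk a b) (hz : z ∈ p.support) :
    G.dist a z + G.dist z b ≤ p.length := by
  have hsp := congrArg Walk.length (p.take_spec hz)
  rw [Walk.length_append] at hsp
  have h1 := G.dist_le (p.takeUntil z hz)
  have h2 := G.dist_le (p.dropUntil z hz)
  omega

lemma two_paths : ∀ (n : ℕ) {a b : V} (p q : G.Walk a b), p.length + q.length ≤ n →
    p.IsPath → q.IsPath → p ≠ q →
    ∃ (x : V) (c : G.Walk x x), c.IsCycle ∧ c.length ≤ p.length + q.length := by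
  intro n
  induction n with
  | zero =>
    intro a b p q hlen hp hq hne
    have hab : a = b := Walk.eq_of_length_eq_zero (p := p) (by omega)
    subst hab
    rw [Walk.isPath_iff_eq_nil] at hp hq
    exact absurd (hp.trans hq.symm) hne
  | succ n ih =>
    intro a b p q hlen hp hq hne
    cases p with
    | nil =>
      rw [Walk.isPath_iff_eq_nil] at hq
      exact absurd hq.symm hne
    | @cons _ x _ hax p' =>
      cases q with
      | nil =>
        rw [Walk.isPath_iff_eq_nil] at hp
        simp at hp
      | @cons _ y _ hay q' =>
        rw [Walk.cons_isPath_iff] at hp hq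
        by_cases hxy : x = y
        · subst hxy
          have hpq : p' ≠ q' := by rintro rfl; exact hne rfl
          obtain ⟨z, c, hc, hcl⟩ := ih p' q'
            (by simp only [Walk.length_cons] at hlen; omega) hp.1 hq.1 hpq
          exact ⟨z, c, hc, by simp only [Walk.length_cons]; omega⟩
        · set W := p'.append q'.reverse with hW
          have haW : a ∉ W.support := by
            rw [hW]
            intro hmem
            rcases (Walk.mem_support_append_iff _ _).1 hmem with hm | hm
            · exact hp.2 hm
            · rw [Walk.support_reverse, List.mem_reverse] at hm
              exact hq.2 hm
          have hB := W.bypass_isPath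
          have haB : a ∉ W.bypass.support := fun hm => haW (W.support_bypass_subset hm)
          have hQ : (W.bypass.concat hay.symm).IsPath :=
            (concat_isPath_iff _ _).2 ⟨hB, haB⟩
          have hedge : s(a, x) ∉ (W.bypass.concat hay.symm).edges := by
            rw [Walk.edges_concat]
            intro hmem
            rw [List.concat_eq_append] at hmem
            rcases List.mem_append.1 hmem with hm | hm
            · exact haB (Walk.fst_mem_support_of_mem_edges _ hm)
            · rw [List.mem_singleton, Sym2.eq_iff] at hm
              rcases hm with ⟨h1, h2⟩ | ⟨h1, h2⟩
              · exact G.irrefl (h2 ▸ hax)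
              · exact hxy h2
          refine ⟨a, Walk.cons hax (W.bypass.concat hay.symm),
            (Walk.cons_isCycle_iff _ _).2 ⟨hQ, hedge⟩, ?_⟩
          have hbl := W.length_bypass_le
          have hWl : W.length = p'.length + q'.length := by
            rw [hW, Walk.length_append, Walk.length_reverse]
          simp only [Walk.length_cons, Walk.length_concat]
          omega

lemma crossing {u v w : V} (huv : G.Adj u v) (p : G.Walk u w) (q : G.Walk v w)
    (hpv : v ∉ p.support) (hqu : u ∉ q.support) :
    ∃ (x : V) (c : G.Walk x x), c.IsCycle ∧ c.length ≤ p.length + q.length + 1 := by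
  set W := p.append q.reverse with hW
  have hB := W.bypass_isPath
  have hedge : s(v, u) ∉ W.bypass.edges := by
    intro hm
    have hm' := W.edges_bypass_subset hm
    rw [hW, Walk.edges_append] at hm'
    rcases List.mem_append.1 hm' with hm' | hm'
    · exact hpv (Walk.fst_mem_support_of_mem_edges _ hm')
    · rw [Walk.edges_reverse, List.mem_reverse] at hm'
      exact hqu (Walk.snd_mem_support_of_mem_edges _ hm')
  refine ⟨v, Walk.cons huv.symm W.bypass,
    (Walk.cons_isCycle_iff _ _).2 ⟨hB, hedge⟩, ?_⟩
  have hbl := W.length_bypass_le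
  have hWl : W.length = p.length + q.length := by
    rw [hW, Walk.length_append, Walk.length_reverse]
  simp only [Walk.length_cons]
  omega

section Part2

variable [Fintype V]

/-- The set of vertices at distance `i` from `u` and `i+1` from `v`. -/
noncomputable def lvl (G : SimpleGraph V) [Fintype V] (u v : V) (i : ℕ) : Finset V :=
  Finset.univ.filter fun w => G.dist u w = i ∧ G.dist v w = i + 1

lemma mem_lvl {u v w : V} {i : ℕ} :
    w ∈ lvl G u v i ↔ G.dist u w = i ∧ G.dist v w = i + 1 := by
  simp [lvl]

lemma badclass {g : ℕ}
    (hgir : ∀ (x : V) (c : G.Walk x x), c.IsCycle → g ≤ c.length)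
    {u v : V} (huv : G.Adj u v) {i : ℕ} (hi : 2 * i + 4 ≤ g)
    {x : V} (hx : x ∈ lvl G u v i) {y : V} (hxy : G.Adj x y)
    (hbad : y ∉ lvl G u v (i + 1)) :
    y = v ∨ G.dist u y + 1 = i := by
  rw [mem_lvl] at hx
  obtain ⟨hux, hvx⟩ := hx
  have hrvx : G.Reachable v x := Reachable.of_dist_ne_zero (by omega)
  have hrux : G.Reachable u x := huv.reachable.trans hrvx
  have hruy : G.Reachable u y := hrux.trans hxy.reachable
  have hrvy : G.Reachable v y := hrvx.trans hxy.reachable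
  have hduv : G.dist u v = 1 := SimpleGraph.dist_eq_one_iff_adj.2 huv
  have hdvu : G.dist v u = 1 := SimpleGraph.dist_eq_one_iff_adj.2 huv.symm
  have hdxy : G.dist x y = 1 := SimpleGraph.dist_eq_one_iff_adj.2 hxy
  have hdyx : G.dist y x = 1 := SimpleGraph.dist_eq_one_iff_adj.2 hxy.symm
  obtain ⟨p, hp, hpl⟩ := hrux.exists_path_of_dist
  rw [hux] at hpl
  have hvp : v ∉ p.support := by
    intro hm
    have := dist_add_dist_le p hm
    rw [hpl] at this
    omega
  have hdy1 : G.dist u y ≤ i + 1 := by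
    have := G.dist_le (p.concat hxy)
    rwa [Walk.length_concat, hpl] at this
  obtain ⟨q, hq, hql⟩ := hruy.exists_path_of_dist
  have hdy2 : i ≤ G.dist u y + 1 := by
    have := G.dist_le (q.concat hxy.symm)
    rw [Walk.length_concat, hql, hux] at this
    omega
  have hdyne : G.dist u y ≠ i := by
    intro hdy
    have hxq : x ∉ q.support := by
      intro hm
      have := dist_add_dist_le q hm
      rw [hql, hdy] at this
      omega
    have hq2 : (q.concat hxy.symm).IsPath := (concat_isPath_iff _ _).2 ⟨hq, hxq⟩
    have hne : p ≠ q.concat hxy.symm := by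
      intro h
      have := congrArg Walk.length h
      rw [hpl, Walk.length_concat, hql, hdy] at this
      omega
    obtain ⟨z, c, hc, hl⟩ := two_paths (2 * i + 1) p (q.concat hxy.symm)
      (by rw [hpl, Walk.length_concat, hql, hdy]; omega) hp hq2 hne
    have := hgir z c hc
    rw [hpl, Walk.length_concat, hql, hdy] at hl
    omega
  rcases Nat.lt_or_ge (G.dist u y) i with hlt | hge
  · right; omega
  have hdy : G.dist u y = i + 1 := by omega
  obtain ⟨pv, hpv, hpvl⟩ := hrvx.exists_path_of_dist
  rw [hvx] at hpvl
  have hey2 : G.dist v y ≤ i + 2 := by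
    have := G.dist_le (pv.concat hxy)
    rwa [Walk.length_concat, hpvl] at this
  obtain ⟨q', hq', hq'l⟩ := hrvy.exists_path_of_dist
  have hey1 : i ≤ G.dist v y := by
    have := G.dist_le (q'.concat hxy.symm)
    rw [Walk.length_concat, hq'l, hvx] at this
    omega
  have heyne : G.dist v y ≠ i + 2 := fun h => hbad (mem_lvl.2 ⟨hdy, h⟩)
  have heyne1 : G.dist v y ≠ i + 1 := by
    intro hey
    have hvq : v ∉ q.support := by
      intro hm
      have := dist_add_dist_le q hm
      rw [hql, hdy] at this
      omega
    have huq' : u ∉ q'.support := by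
      intro hm
      have := dist_add_dist_le q' hm
      rw [hq'l, hey] at this
      omega
    obtain ⟨z, c, hc, hl⟩ := crossing huv q q' hvq huq'
    have := hgir z c hc
    rw [hql, hq'l, hdy, hey] at hl
    omega
  have hey : G.dist v y = i := by omega
  by_cases hyv : y = v
  · exact Or.inl hyv
  exfalso
  have hyp : y ∉ p.support := by
    intro hm
    have := dist_add_dist_le p hm
    rw [hpl, hdy] at this
    omega
  have hvp' : v ∉ (p.concat hxy).support := by
    rw [Walk.support_concat]
    intro hm
    rcases List.mem_append.1 hm with hm | hm
    · exact hvp hm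
    · rw [List.mem_singleton] at hm
      exact hyv hm.symm
  have huq' : u ∉ q'.support := by
    intro hm
    have := dist_add_dist_le q' hm
    rw [hq'l, hey, hdy] at this
    omega
  obtain ⟨z, c, hc, hl⟩ := crossing huv (p.concat hxy) q' hvp' huq'
  have := hgir z c hc
  rw [Walk.length_concat, hpl, hq'l, hey] at hl
  omega

lemma bad_unique {g : ℕ}
    (hgir : ∀ (x : V) (c : G.Walk x x), c.IsCycle → g ≤ c.length)
    {u v : V} (huv : G.Adj u v) {i : ℕ} (hi : 2 * i + 4 ≤ g)
    {x : V} (hx : x ∈ lvl G u v i) {y1 y2 : V}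
    (h1 : G.Adj x y1) (h2 : G.Adj x y2)
    (e1 : G.dist u y1 + 1 = i) (e2 : G.dist u y2 + 1 = i) : y1 = y2 := by
  by_contra hne
  rw [mem_lvl] at hx
  obtain ⟨hux, hvx⟩ := hx
  have hrvx : G.Reachable v x := Reachable.of_dist_ne_zero (by omega)
  have hrux : G.Reachable u x := huv.reachable.trans hrvx
  have hr1 : G.Reachable u y1 := hrux.trans h1.reachable
  have hr2 : G.Reachable u y2 := hrux.trans h2.reachable
  have hd1 : G.dist x y1 = 1 := SimpleGraph.dist_eq_one_iff_adj.2 h1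
  have hd2 : G.dist x y2 = 1 := SimpleGraph.dist_eq_one_iff_adj.2 h2
  obtain ⟨q1, hq1, hq1l⟩ := hr1.exists_path_of_dist
  obtain ⟨q2, hq2, hq2l⟩ := hr2.exists_path_of_dist
  have hxq1 : x ∉ q1.support := by
    intro hm
    have := dist_add_dist_le q1 hm
    rw [hq1l] at this
    omega
  have hxq2 : x ∉ q2.support := by
    intro hm
    have := dist_add_dist_le q2 hm
    rw [hq2l] at this
    omega
  have hP1 : (q1.concat h1.symm).IsPath := (concat_isPath_iff _ _).2 ⟨hq1, hxq1⟩
  have hP2 : (q2.concat h2.symm).IsPath := (concat_isPath_iff _ _).2 ⟨hq2, hxq2⟩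
  have hPne : q1.concat h1.symm ≠ q2.concat h2.symm := by
    intro h
    obtain ⟨hv, -⟩ := Walk.concat_inj h
    exact hne hv
  obtain ⟨z, c, hc, hl⟩ := two_paths (2 * i) (q1.concat h1.symm) (q2.concat h2.symm)
    (by rw [Walk.length_concat, Walk.length_concat, hq1l, hq2l]; omega) hP1 hP2 hPne
  have := hgir z c hc
  rw [Walk.length_concat, Walk.length_concat, hq1l, hq2l] at hl
  omega

lemma parent_unique {g : ℕ}
    (hgir : ∀ (x : V) (c : G.Walk x x), c.IsCycle → g ≤ c.length)
    {u v : V} (huv : G.Adj u v) {i : ℕ} (hi : 2 * i + 4 ≤ g)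
    {x1 x2 y : V} (hx1 : x1 ∈ lvl G u v i) (hx2 : x2 ∈ lvl G u v i)
    (h1 : G.Adj x1 y) (h2 : G.Adj x2 y) (hy : G.dist u y = i + 1) : x1 = x2 := by
  by_contra hne
  rw [mem_lvl] at hx1 hx2
  have hr1 : G.Reachable u x1 :=
    huv.reachable.trans (Reachable.of_dist_ne_zero (by omega))
  have hr2 : G.Reachable u x2 :=
    huv.reachable.trans (Reachable.of_dist_ne_zero (by omega))
  have hd1 : G.dist y x1 = 1 := SimpleGraph.dist_eq_one_iff_adj.2 h1.symm
  have hd2 : G.dist y x2 = 1 := SimpleGraph.dist_eq_one_iff_adj.2 h2.symm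
  obtain ⟨p1, hp1, hp1l⟩ := hr1.exists_path_of_dist
  obtain ⟨p2, hp2, hp2l⟩ := hr2.exists_path_of_dist
  rw [hx1.1] at hp1l
  rw [hx2.1] at hp2l
  have hyp1 : y ∉ p1.support := by
    intro hm
    have := dist_add_dist_le p1 hm
    rw [hp1l, hy] at this
    omega
  have hyp2 : y ∉ p2.support := by
    intro hm
    have := dist_add_dist_le p2 hm
    rw [hp2l, hy] at this
    omega
  have hP1 : (p1.concat h1).IsPath := (concat_isPath_iff _ _).2 ⟨hp1, hyp1⟩
  have hP2 : (p2.concat h2).IsPath := (concat_isPath_iff _ _).2 ⟨hp2, hyp2⟩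
  have hPne : p1.concat h1 ≠ p2.concat h2 := by
    intro h
    obtain ⟨hv, -⟩ := Walk.concat_inj h
    exact hne hv
  obtain ⟨z, c, hc, hl⟩ := two_paths (2 * i + 2) (p1.concat h1) (p2.concat h2)
    (by rw [Walk.length_concat, Walk.length_concat, hp1l, hp2l]; omega) hP1 hP2 hPne
  have := hgir z c hc
  rw [Walk.length_concat, Walk.length_concat, hp1l, hp2l] at hl
  omega

end Part2


section Part3

variable {V : Type*} [DecidableEq V] {G : SimpleGraph V} [Fintype V] [DecidableRel G.Adj]

open MooreAux in
lemma step {k g : ℕ} (hk : 3 ≤ k) (hdeg : ∀ x : V, G.degree x = k)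
    (hgir : ∀ (x : V) (c : G.Walk x x), c.IsCycle → g ≤ c.length)
    {u v : V} (huv : G.Adj u v) {i : ℕ} (hi : 2 * i + 4 ≤ g) :
    (k - 1) * (lvl G u v i).card ≤ (lvl G u v (i + 1)).card := by
  classical
  set good : V → Finset V :=
    (fun x => (G.neighborFinset x).filter (fun y => y ∈ lvl G u v (i + 1))) with hgood
  have hsub : ∀ x ∈ lvl G u v i, good x ⊆ lvl G u v (i + 1) := by
    intro x _ y hy
    rw [hgood, Finset.mem_filter] at hy
    exact hy.2
  have hcard : ∀ x ∈ lvl G u v i, k - 1 ≤ (good x).card := by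
    intro x hx
    have hsplit : (good x).card + ((G.neighborFinset x).filter
        (fun y => ¬ y ∈ lvl G u v (i + 1))).card = (G.neighborFinset x).card :=
      Finset.card_filter_add_card_filter_not _
    have hbad : ((G.neighborFinset x).filter
        (fun y => ¬ y ∈ lvl G u v (i + 1))).card ≤ 1 := by
      rw [Finset.card_le_one]
      intro y1 hy1 y2 hy2
      rw [Finset.mem_filter, mem_neighborFinset] at hy1 hy2
      have hvx : G.dist v x = i + 1 := (mem_lvl.1 hx).2
      rcases badclass hgir huv hi hx hy1.1 hy1.2 with h1 | d1 <;>
        rcases badclass hgir huv hi hx hy2.1 hy2.2 with h2 | d2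
      · rw [h1, h2]
      · exfalso
        have : G.dist v x = 1 := SimpleGraph.dist_eq_one_iff_adj.2 (h1 ▸ hy1.1).symm
        omega
      · exfalso
        have : G.dist v x = 1 := SimpleGraph.dist_eq_one_iff_adj.2 (h2 ▸ hy2.1).symm
        omega
      · exact bad_unique hgir huv hi hx hy1.1 hy2.1 d1 d2
    have hdegx : (G.neighborFinset x).card = k := hdeg x
    omega
  have hdisj : ∀ x1 ∈ lvl G u v i, ∀ x2 ∈ lvl G u v i, x1 ≠ x2 →
      Disjoint (good x1) (good x2) := by
    intro x1 h1 x2 h2 hne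
    rw [Finset.disjoint_left]
    intro y hy1 hy2
    rw [hgood, Finset.mem_filter, mem_neighborFinset] at hy1 hy2
    exact hne (parent_unique hgir huv hi h1 h2 hy1.1 hy2.1 (mem_lvl.1 hy1.2).1)
  calc (k - 1) * (lvl G u v i).card = (lvl G u v i).card • (k - 1) := by
        rw [smul_eq_mul, mul_comm]
    _ ≤ ∑ x ∈ lvl G u v i, (good x).card := Finset.card_nsmul_le_sum _ _ _ hcard
    _ = ((lvl G u v i).biUnion good).card := (Finset.card_biUnion hdisj).symm
    _ ≤ (lvl G u v (i + 1)).card := by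
        apply Finset.card_le_card
        rw [Finset.biUnion_subset]
        exact hsub

open MooreAux in
lemma side {k g : ℕ} (hk : 3 ≤ k) (hdeg : ∀ x : V, G.degree x = k)
    (hgir : ∀ (x : V) (c : G.Walk x x), c.IsCycle → g ≤ c.length)
    {u v : V} (huv : G.Adj u v) :
    ∀ i : ℕ, 2 * i + 2 ≤ g → (k - 1) ^ i ≤ (lvl G u v i).card := by
  intro i
  induction i with
  | zero =>
    intro _
    have hu : u ∈ lvl G u v 0 := by
      rw [mem_lvl]
      exact ⟨SimpleGraph.dist_self, SimpleGraph.dist_eq_one_iff_adj.2 huv.symm⟩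
    have := Finset.card_pos.2 ⟨u, hu⟩
    simpa using this
  | succ i ih =>
    intro h
    calc (k - 1) ^ (i + 1) = (k - 1) * (k - 1) ^ i := by ring
      _ ≤ (k - 1) * (lvl G u v i).card :=
          Nat.mul_le_mul_left _ (ih (by omega))
      _ ≤ (lvl G u v (i + 1)).card := step hk hdeg hgir huv (by omega)

end Part3

end MooreAux

/-- **Moore bound, even girth.** If `G` is a `k`-regular graph (`k ≥ 3`) with even girth `g`,
then the number of vertices of `G` is at least
`2 ∑_{i=0}^{(g-2)/2} (k-1)^i = (2(k-1)^{g/2} - 2)/(k-2)`. -/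
theorem moore_bound_even_girth {V : Type*} [Fintype V] (G : SimpleGraph V) (k g : ℕ)
    (hk : 3 ≤ k) (hreg : ∀ v : V, Nat.card (G.neighborSet v) = k)
    (heven : Even g) (hg : G.girth = g) :
    2 * ∑ i ∈ Finset.range (g / 2), (k - 1) ^ i ≤ Fintype.card V := by
  classical
  by_cases hac : G.IsAcyclic
  · have hg0 : g = 0 := by rw [← hg]; exact hac.girth_eq_zero
    subst hg0
    simp
  · have hg3 : 3 ≤ g := hg ▸ SimpleGraph.three_le_girth hac
    obtain ⟨m, hm⟩ := heven
    have hegirth : G.egirth = (g : ℕ∞) := by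
      have h1 : G.egirth ≠ ⊤ := fun h => hac (SimpleGraph.egirth_eq_top.1 h)
      rw [← hg]
      exact (ENat.coe_toNat h1).symm
    have hgir : ∀ (x : V) (c : G.Walk x x), c.IsCycle → g ≤ c.length := by
      intro x c hc
      have hle := SimpleGraph.le_egirth.1 le_rfl x c hc
      rw [hegirth] at hle
      exact_mod_cast hle
    have hdeg : ∀ x : V, G.degree x = k := by
      intro x
      rw [← hreg x, ← SimpleGraph.card_neighborSet_eq_degree, Nat.card_eq_fintype_card]
    obtain ⟨a, w, hw, hlen⟩ := SimpleGraph.exists_girth_eq_length.2 hac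
    cases w with
    | nil => exact absurd hw.three_le_length (by simp)
    | @cons _ b _ hab w' =>
      have key1 := fun (i : ℕ) (hi : i ∈ Finset.range (g / 2)) =>
        MooreAux.side hk hdeg hgir hab i (by rw [Finset.mem_range] at hi; omega)
      have key2 := fun (i : ℕ) (hi : i ∈ Finset.range (g / 2)) =>
        MooreAux.side hk hdeg hgir hab.symm i (by rw [Finset.mem_range] at hi; omega)
      set A := (Finset.range (g / 2)).biUnion (MooreAux.lvl G a b) with hA
      set B := (Finset.range (g / 2)).biUnion (MooreAux.lvl G b a) with hB
      have hAd : ∀ i ∈ Finset.range (g / 2), ∀ j ∈ Finset.range (g / 2), i ≠ j →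
          Disjoint (MooreAux.lvl G a b i) (MooreAux.lvl G a b j) := by
        intro i _ j _ hne
        rw [Finset.disjoint_left]
        intro w h1 h2
        rw [MooreAux.mem_lvl] at h1 h2
        omega
      have hBd : ∀ i ∈ Finset.range (g / 2), ∀ j ∈ Finset.range (g / 2), i ≠ j →
          Disjoint (MooreAux.lvl G b a i) (MooreAux.lvl G b a j) := by
        intro i _ j _ hne
        rw [Finset.disjoint_left]
        intro w h1 h2
        rw [MooreAux.mem_lvl] at h1 h2
        omega
      have hAcard : ∑ i ∈ Finset.range (g / 2), (MooreAux.lvl G a b i).card = A.card :=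
        (Finset.card_biUnion hAd).symm
      have hBcard : ∑ i ∈ Finset.range (g / 2), (MooreAux.lvl G b a i).card = B.card :=
        (Finset.card_biUnion hBd).symm
      have hdisjAB : Disjoint A B := by
        rw [Finset.disjoint_left]
        intro w h1 h2
        rw [hA, Finset.mem_biUnion] at h1
        rw [hB, Finset.mem_biUnion] at h2
        obtain ⟨i, -, h1⟩ := h1
        obtain ⟨j, -, h2⟩ := h2
        rw [MooreAux.mem_lvl] at h1 h2
        omega
      have hug : (A ∪ B).card ≤ Fintype.card V :=
        le_trans (Finset.card_le_univ _) (le_of_eq Finset.card_univ)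
      have hsumA : ∑ i ∈ Finset.range (g / 2), (k - 1) ^ i ≤ A.card := by
        rw [← hAcard]; exact Finset.sum_le_sum key1
      have hsumB : ∑ i ∈ Finset.range (g / 2), (k - 1) ^ i ≤ B.card := by
        rw [← hBcard]; exact Finset.sum_le_sum key2
      have hcu := Finset.card_union_of_disjoint hdisjAB
      omega
end

section
/- Let k > 2 be an even integer and let 𝒢 = {(i,j) : 1 ≤ i ≤ k-1, 1 ≤ j ≤ k} be the k × (k-1) integer grid. Then 𝒢 admits a rectangle-free perfect matching, that is, a perfect matching of its points such that no two matched pairs have their four points forming an axis-parallel rectangle. -/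
private lemma two_cancel {n a b : ℕ} (hodd : Odd n) (ha : a < n) (hb : b < n)
    (h : 2 * a ≡ 2 * b [MOD n]) : a = b := by
  have h2 : Nat.Coprime 2 n := Nat.coprime_two_left.mpr hodd
  have h3 : a ≡ b [MOD n] := h.cancel_left_of_coprime (by simpa [Nat.Coprime] using h2)
  rwa [Nat.ModEq, Nat.mod_eq_of_lt ha, Nat.mod_eq_of_lt hb] at h3

private def partner (n k : ℕ) (hnk : n < k) (i : Fin n) (j : Fin k) : Fin k :=
  if j.val = n then ⟨i.val, i.isLt.trans hnk⟩
  else if j.val = i.val then ⟨n, hnk⟩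
  else ⟨(2 * i.val + n - j.val) % n, (Nat.mod_lt _ i.pos).trans hnk⟩

private lemma partner_top {n k : ℕ} (hnk : n < k) (i : Fin n) (j : Fin k)
    (h : j.val = n) : partner n k hnk i j = ⟨i.val, i.isLt.trans hnk⟩ := by
  unfold partner; rw [if_pos h]

private lemma partner_diag {n k : ℕ} (hnk : n < k) (i : Fin n) (j : Fin k)
    (h : j.val = i.val) : partner n k hnk i j = ⟨n, hnk⟩ := by
  unfold partner; rw [if_neg (by have := i.isLt; omega), if_pos h]

private lemma partner_gen {n k : ℕ} (hnk : n < k) (i : Fin n) (j : Fin k)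
    (h1 : j.val ≠ n) (h2 : j.val ≠ i.val) :
    partner n k hnk i j = ⟨(2 * i.val + n - j.val) % n, (Nat.mod_lt _ i.pos).trans hnk⟩ := by
  unfold partner; rw [if_neg h1, if_neg h2]

private lemma branch3_modeq {n i j : ℕ} (hj : j < n) :
    (2 * i + n - j) % n + j ≡ 2 * i [MOD n] := by
  calc (2 * i + n - j) % n + j ≡ (2 * i + n - j) + j [MOD n] :=
        Nat.ModEq.add_right _ (Nat.mod_modEq _ _)
    _ = 2 * i + n := by omega
    _ ≡ 2 * i + 0 [MOD n] := Nat.ModEq.add_left _ (Nat.modEq_zero_iff_dvd.mpr dvd_rfl)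
    _ = 2 * i := by omega

private lemma partner_ne {n k : ℕ} (hodd : Odd n) (hnk : n < k) (i : Fin n) (j : Fin k)
    (hj : j.val ≤ n) : partner n k hnk i j ≠ j := by
  intro h
  by_cases h1 : j.val = n
  · rw [partner_top hnk i j h1] at h
    have := congrArg Fin.val h; simp only at this; have := i.isLt; omega
  by_cases h2 : j.val = i.val
  · rw [partner_diag hnk i j h2] at h
    have := congrArg Fin.val h; simp only at this; omega
  rw [partner_gen hnk i j h1 h2] at h
  have hv := congrArg Fin.val h; simp only at hv
  have hjn : j.val < n := by omega
  have e1 := branch3_modeq (i := i.val) hjn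
  rw [hv] at e1
  have e2 : 2 * j.val ≡ 2 * i.val [MOD n] := by
    have : j.val + j.val = 2 * j.val := by omega
    rwa [this] at e1
  exact h2 (two_cancel hodd hjn i.isLt e2)

private lemma partner_invol {n k : ℕ} (hnk : n < k) (i : Fin n) (j : Fin k)
    (hj : j.val ≤ n) : partner n k hnk i (partner n k hnk i j) = j := by
  have hi := i.isLt
  by_cases h1 : j.val = n
  · rw [partner_top hnk i j h1, partner_diag hnk i _ rfl]
    exact Fin.ext h1.symm
  by_cases h2 : j.val = i.val
  · rw [partner_diag hnk i j h2, partner_top hnk i _ rfl]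
    exact Fin.ext h2.symm
  rw [partner_gen hnk i j h1 h2]
  have hjn : j.val < n := by omega
  set p := (2 * i.val + n - j.val) % n with hp
  have hpn : p < n := Nat.mod_lt _ i.pos
  have e1 : p + j.val ≡ 2 * i.val [MOD n] := branch3_modeq hjn
  have hpi : p ≠ i.val := by
    intro hc
    have h2i : 2 * i.val = p + p := by omega
    have h' : p + j.val ≡ p + p [MOD n] := h2i ▸ e1
    have := Nat.ModEq.eq_of_lt_of_lt (h'.add_left_cancel' _) hjn hpn
    omega
  rw [partner_gen hnk i _ (by simp only; omega) (by simpa using hpi)]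
  apply Fin.ext
  simp only
  have e2 : (2 * i.val + n - p) % n + p ≡ 2 * i.val [MOD n] := branch3_modeq hpn
  have e3 : (2 * i.val + n - p) % n + p ≡ j.val + p [MOD n] :=
    e2.trans (by calc 2 * i.val ≡ p + j.val [MOD n] := e1.symm
      _ = j.val + p := by omega)
  exact Nat.ModEq.eq_of_lt_of_lt (e3.add_right_cancel' p) (Nat.mod_lt _ i.pos) hjn

private lemma partner_inj_row {n k : ℕ} (hodd : Odd n) (hnk : n < k) (i₁ i₂ : Fin n)
    (j j' : Fin k) (hj : j.val ≤ n)
    (h1 : partner n k hnk i₁ j = j') (h2 : partner n k hnk i₂ j = j') : i₁ = i₂ := by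
  apply Fin.ext
  by_cases hA : j.val = n
  · rw [partner_top hnk i₁ j hA] at h1
    rw [partner_top hnk i₂ j hA] at h2
    have := congrArg Fin.val (h1.trans h2.symm); simpa using this
  have hjn : j.val < n := by omega
  by_cases hB1 : j.val = i₁.val
  · by_cases hB2 : j.val = i₂.val
    · omega
    · rw [partner_diag hnk i₁ j hB1] at h1
      rw [partner_gen hnk i₂ j hA hB2] at h2
      have := congrArg Fin.val (h1.trans h2.symm); simp only at this
      have : (2 * i₂.val + n - j.val) % n < n := Nat.mod_lt _ i₂.pos
      omega
  by_cases hB2 : j.val = i₂.val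
  · rw [partner_diag hnk i₂ j hB2] at h2
    rw [partner_gen hnk i₁ j hA hB1] at h1
    have := congrArg Fin.val (h1.trans h2.symm); simp only at this
    have h5 : (2 * i₁.val + n - j.val) % n < n := Nat.mod_lt _ i₁.pos
    omega
  rw [partner_gen hnk i₁ j hA hB1] at h1
  rw [partner_gen hnk i₂ j hA hB2] at h2
  have hv := congrArg Fin.val (h1.trans h2.symm); simp only at hv
  have e1 := branch3_modeq (i := i₁.val) hjn
  have e2 := branch3_modeq (i := i₂.val) hjn
  rw [hv] at e1
  exact two_cancel hodd i₁.isLt i₂.isLt (e1.symm.trans e2)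

/-- For even `k > 2`, the `k × (k-1)` integer grid (points `(i,j)`, `1 ≤ i ≤ k-1`,
`1 ≤ j ≤ k`, here modelled as `Fin (k-1) × Fin k`) admits a rectangle-free perfect
matching: a fixed-point-free involution `m` pairing up the grid points such that no two
matched pairs `{(i₁,j₁),(i₁,j₂)}` and `{(i₂,j₁),(i₂,j₂)}` with `i₁ ≠ i₂` exist
(the four vertices of no two matched pairs form a rectangle). -/
theorem grid_rectangle_free_matching (k : ℕ) (hk : 2 < k) (hke : Even k) :
    ∃ m : (Fin (k - 1) × Fin k) → (Fin (k - 1) × Fin k),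
      (∀ p, m p ≠ p) ∧ (∀ p, m (m p) = p) ∧
      ¬ ∃ (i₁ i₂ : Fin (k - 1)) (j₁ j₂ : Fin k), i₁ ≠ i₂ ∧ j₁ ≠ j₂ ∧
          m (i₁, j₁) = (i₁, j₂) ∧ m (i₂, j₁) = (i₂, j₂) := by
  have hnk : k - 1 < k := by omega
  have hodd : Odd (k - 1) := by
    obtain ⟨t, ht⟩ := hke; exact ⟨t - 1, by omega⟩
  have hjle : ∀ j : Fin k, j.val ≤ k - 1 := fun j => by have := j.isLt; omega
  refine ⟨fun p => (p.1, partner (k - 1) k hnk p.1 p.2), ?_, ?_, ?_⟩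
  · intro p h
    exact partner_ne hodd hnk p.1 p.2 (hjle p.2) (congrArg Prod.snd h)
  · intro p
    exact Prod.ext rfl (partner_invol hnk p.1 p.2 (hjle p.2))
  · rintro ⟨i₁, i₂, j₁, j₂, hi, hj, h1, h2⟩
    exact hi (partner_inj_row hodd hnk i₁ i₂ j₁ j₂ (hjle j₁)
      (congrArg Prod.snd h1) (congrArg Prod.snd h2))
end

section
/- Let G be a t-regular induced subgraph of the incidence (Levi) graph of a generalized quadrangle of order (s,s), with t odd, and let W be a deleteable subset of vertices. Then in the subgraph G' of G induced on V \ W, every vertex has degree t or t-1; a vertex has degree t-1 in G' if and only if it has a neighbour in W. -/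
/-- A finite generalized quadrangle of order `(s,t)`: a point-line incidence structure in
which two distinct points lie on at most one common line, every line has `s+1` points,
every point is on `t+1` lines, and for every non-incident point-line pair `(p,l)` there
is exactly one line through `p` meeting `l`. -/
structure GenQuad (s t : ℕ) where
  P : Type
  L : Type
  inc : P → L → Prop
  unique_line : ∀ ⦃p q : P⦄, p ≠ q → ∀ ⦃l m : L⦄,
    inc p l → inc q l → inc p m → inc q m → l = m
  line_points : ∀ l : L, Nat.card {p : P // inc p l} = s + 1
  point_lines : ∀ p : P, Nat.card {l : L // inc p l} = t + 1
  quad : ∀ (p : P) (l : L), ¬ inc p l →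
    ∃! m : L, inc p m ∧ ∃ r : P, inc r m ∧ inc r l

/-- The incidence (Levi) graph of a generalized quadrangle: the bipartite graph on
points and lines with adjacency given by incidence. -/
def GenQuad.levi {s t : ℕ} (Q : GenQuad s t) : SimpleGraph (Q.P ⊕ Q.L) :=
  SimpleGraph.fromRel (fun x y => ∃ p l, x = Sum.inl p ∧ y = Sum.inr l ∧ Q.inc p l)

/-- A subset `W` of the vertex set `V` of a `t`-regular induced subgraph of the Levi
graph of a `GQ(s,s)` is *deleteable* if: whenever `W` contains two intersecting lines
with intersection point `p`, it contains `p` and all lines of the subgraph through `p`;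
and whenever `W` contains two collinear points with joining line `l`, it contains `l`
and all points of the subgraph on `l`. -/
def GenQuad.Deleteable {s t : ℕ} (Q : GenQuad s t) (V : Set (Q.P ⊕ Q.L))
    (W : Set V) : Prop :=
  (∀ (l₁ l₂ : Q.L) (h₁ : Sum.inr l₁ ∈ V) (h₂ : Sum.inr l₂ ∈ V),
      (⟨Sum.inr l₁, h₁⟩ : V) ∈ W → (⟨Sum.inr l₂, h₂⟩ : V) ∈ W → l₁ ≠ l₂ →
      ∀ p : Q.P, Q.inc p l₁ → Q.inc p l₂ →
        (∀ hp : Sum.inl p ∈ V, (⟨Sum.inl p, hp⟩ : V) ∈ W) ∧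
        (∀ (m : Q.L) (hm : Sum.inr m ∈ V), Q.inc p m → (⟨Sum.inr m, hm⟩ : V) ∈ W)) ∧
  (∀ (p₁ p₂ : Q.P) (h₁ : Sum.inl p₁ ∈ V) (h₂ : Sum.inl p₂ ∈ V),
      (⟨Sum.inl p₁, h₁⟩ : V) ∈ W → (⟨Sum.inl p₂, h₂⟩ : V) ∈ W → p₁ ≠ p₂ →
      ∀ l : Q.L, Q.inc p₁ l → Q.inc p₂ l →
        (∀ hl : Sum.inr l ∈ V, (⟨Sum.inr l, hl⟩ : V) ∈ W) ∧
        (∀ (r : Q.P) (hr : Sum.inl r ∈ V), Q.inc r l → (⟨Sum.inl r, hr⟩ : V) ∈ W))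

/-- Let `G` be a `t`-regular induced subgraph (on vertex set `V`) of the Levi graph of a
generalized quadrangle of order `(s,s)` with `t` odd, and let `W ⊆ V` be a deleteable
subset. In the subgraph `G'` induced on `V \ W`, every vertex has degree `t` or `t-1`,
and a vertex has degree `t-1` if and only if it has a neighbour in `W`. -/
theorem deleteable_induced_degrees {s t : ℕ} (Q : GenQuad s t)
    [Fintype Q.P] [Fintype Q.L]
    (V : Set (Q.P ⊕ Q.L)) (W : Set V) (ht : Odd t)
    (hreg : ∀ v : V, Nat.card ((Q.levi.induce V).neighborSet v) = t)
    (hW : Q.Deleteable V W) :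
    ∀ v : ↥(Wᶜ),
      (Nat.card (((Q.levi.induce V).induce Wᶜ).neighborSet v) = t ∨
        Nat.card (((Q.levi.induce V).induce Wᶜ).neighborSet v) = t - 1) ∧
      (Nat.card (((Q.levi.induce V).induce Wᶜ).neighborSet v) = t - 1 ↔
        ∃ w ∈ W, (Q.levi.induce V).Adj v.1 w) := by
  classical
  intro v
  have hfinV : Finite (↥V) := Subtype.finite
  set A : Set V := (Q.levi.induce V).neighborSet v.1 with hA
  have hAcard : Nat.card A = t := hreg v.1
  -- degree in induced graph equals ncard (A \ W)
  have hdeg : Nat.card (((Q.levi.induce V).induce Wᶜ).neighborSet v) = (A \ W).ncard := by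
    rw [← Nat.card_coe_set_eq]
    exact Nat.card_congr
      ⟨fun u => ⟨u.1.1, u.2, u.1.2⟩, fun w => ⟨⟨w.1, w.2.2⟩, w.2.1⟩,
        fun u => rfl, fun w => rfl⟩
  -- at most one neighbour of v lies in W
  have hsub : ∀ w₁ ∈ A ∩ W, ∀ w₂ ∈ A ∩ W, w₁ = w₂ := by
    rintro ⟨w₁, hw₁V⟩ ⟨ha₁, hw₁⟩ ⟨w₂, hw₂V⟩ ⟨ha₂, hw₂⟩
    by_contra hne
    have hadj₁ : Q.levi.Adj v.1.1 w₁ := ha₁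
    have hadj₂ : Q.levi.Adj v.1.1 w₂ := ha₂
    rw [GenQuad.levi, SimpleGraph.fromRel_adj] at hadj₁ hadj₂
    obtain ⟨-, h₁⟩ := hadj₁
    obtain ⟨-, h₂⟩ := hadj₂
    rcases hv : v.1.1 with p | l
    · -- v is a point; neighbours are lines
      obtain ⟨l₁, hw₁eq, hinc₁⟩ : ∃ l, w₁ = Sum.inr l ∧ Q.inc p l := by
        rcases h₁ with ⟨p', l', hv', hw', hi⟩ | ⟨p', l', hw', hv', hi⟩
        · rw [hv] at hv'
          obtain rfl : p = p' := Sum.inl.inj hv'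
          exact ⟨l', hw', hi⟩
        · rw [hv] at hv'; exact absurd hv' (by simp)
      obtain ⟨l₂, hw₂eq, hinc₂⟩ : ∃ l, w₂ = Sum.inr l ∧ Q.inc p l := by
        rcases h₂ with ⟨p', l', hv', hw', hi⟩ | ⟨p', l', hw', hv', hi⟩
        · rw [hv] at hv'
          obtain rfl : p = p' := Sum.inl.inj hv'
          exact ⟨l', hw', hi⟩
        · rw [hv] at hv'; exact absurd hv' (by simp)
      subst hw₁eq; subst hw₂eq
      have hll : l₁ ≠ l₂ := by
        intro h; exact hne (by simp [h])
      have hp : Sum.inl p ∈ V := hv ▸ v.1.2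
      have hWp := (hW.1 l₁ l₂ hw₁V hw₂V hw₁ hw₂ hll p hinc₁ hinc₂).1 hp
      exact v.2 (by rw [show v.1 = (⟨Sum.inl p, hp⟩ : V) from Subtype.ext hv]; exact hWp)
    · -- v is a line; neighbours are points
      obtain ⟨p₁, hw₁eq, hinc₁⟩ : ∃ p, w₁ = Sum.inl p ∧ Q.inc p l := by
        rcases h₁ with ⟨p', l', hv', hw', hi⟩ | ⟨p', l', hw', hv', hi⟩
        · rw [hv] at hv'; exact absurd hv' (by simp)
        · rw [hv] at hv'
          obtain rfl : l = l' := Sum.inr.inj hv'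
          exact ⟨p', hw', hi⟩
      obtain ⟨p₂, hw₂eq, hinc₂⟩ : ∃ p, w₂ = Sum.inl p ∧ Q.inc p l := by
        rcases h₂ with ⟨p', l', hv', hw', hi⟩ | ⟨p', l', hw', hv', hi⟩
        · rw [hv] at hv'; exact absurd hv' (by simp)
        · rw [hv] at hv'
          obtain rfl : l = l' := Sum.inr.inj hv'
          exact ⟨p', hw', hi⟩
      subst hw₁eq; subst hw₂eq
      have hpp : p₁ ≠ p₂ := by
        intro h; exact hne (by simp [h])
      have hl : Sum.inr l ∈ V := hv ▸ v.1.2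
      have hWl := (hW.2 p₁ p₂ hw₁V hw₂V hw₁ hw₂ hpp l hinc₁ hinc₂).1 hl
      exact v.2 (by rw [show v.1 = (⟨Sum.inr l, hl⟩ : V) from Subtype.ext hv]; exact hWl)
  have hcardW : (A ∩ W).ncard ≤ 1 := (Set.ncard_le_one (Set.toFinite _)).mpr hsub
  have hsplit : (A ∩ W).ncard + (A \ W).ncard = t := by
    rw [Set.ncard_inter_add_ncard_diff_eq_ncard A W (Set.toFinite _),
      ← Nat.card_coe_set_eq]
    exact hAcard
  have ht1 : 1 ≤ t := Nat.one_le_iff_ne_zero.mpr (by rintro rfl; simp [Nat.odd_iff] at ht)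
  rw [hdeg]
  rcases Nat.le_one_iff_eq_zero_or_eq_one.mp hcardW with h0 | h1
  · -- no neighbour in W
    have hAW : A ∩ W = ∅ := (Set.ncard_eq_zero (Set.toFinite _)).mp h0
    have hdt : (A \ W).ncard = t := by omega
    refine ⟨Or.inl hdt, ?_⟩
    constructor
    · intro h; omega
    · rintro ⟨w, hwW, hwadj⟩
      have hwA : w ∈ A := hwadj
      have : w ∈ A ∩ W := ⟨hwA, hwW⟩
      rw [hAW] at this
      exact this.elim
  · -- exactly one neighbour in W
    have hdt : (A \ W).ncard = t - 1 := by omega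
    refine ⟨Or.inr hdt, ⟨fun _ => ?_, fun _ => hdt⟩⟩
    obtain ⟨w, hw⟩ := Set.ncard_eq_one.mp h1
    have hwmem : w ∈ A ∩ W := hw ▸ rfl
    exact ⟨w, hwmem.2, hwmem.1⟩
end

section
/- Under the hypotheses of the preceding construction (t-regular induced subgraph G of the Levi graph of a GQ(s,s), deleteable set W removed, perfect matching of degree-(t-1) vertices added along deleted lines/points), every 6-cycle of the resulting graph Γ contains exactly two new (matching) edges, and can be written either as u₁v₂v₃u₄v₅v₆ or u₁v₂v₃u₄u₅v₆, where the vertices labeled u are all of one type (point or line) and the vertices labeled v are all of the other type. -/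
section SixCycleHelpers

set_option maxRecDepth 10000 in
private lemma comb_aux : ∀ c b : Fin 6 → Bool,
    (∀ i, b (i+1) = cond (c i) (b i) (!(b i))) →
    (∀ i, c i = true → c (i+1) = true → False) →
    (∃ i, c i = true) →
    ∃ k : Fin 6,
      ((∀ i, c i = (decide (i = k+1) || decide (i = k+4))) ∨
       (∀ i, c i = (decide (i = k+1) || decide (i = k+3)))) := by decide

private lemma fin6_ne_add2 : ∀ i : Fin 6, i ≠ i + 1 + 1 := by decide

end SixCycleHelpers

section GQHelpers
variable {s t : ℕ} (Q : GenQuad s t)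

private lemma gq_hex {p1 p2 p3 : Q.P} {l1 l2 l3 : Q.L}
    (hp23 : p2 ≠ p3) (hl12 : l1 ≠ l2) (hl23 : l2 ≠ l3)
    (h11 : Q.inc p1 l1) (h21 : Q.inc p2 l1) (h22 : Q.inc p2 l2) (h32 : Q.inc p3 l2)
    (h33 : Q.inc p3 l3) (h13 : Q.inc p1 l3) : False := by
  have hn : ¬ Q.inc p3 l1 := fun h => hl12 (Q.unique_line hp23 h21 h h22 h32)
  obtain ⟨m, _, hu⟩ := Q.quad p3 l1 hn
  have e2 : l2 = m := hu l2 ⟨h32, p2, h22, h21⟩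
  have e3 : l3 = m := hu l3 ⟨h33, p1, h13, h11⟩
  exact hl23 (e2.trans e3.symm)

private lemma levi_adj_cases {x y : Q.P ⊕ Q.L} (h : Q.levi.Adj x y) :
    (∃ p l, x = Sum.inl p ∧ y = Sum.inr l ∧ Q.inc p l) ∨
    (∃ p l, y = Sum.inl p ∧ x = Sum.inr l ∧ Q.inc p l) := by
  rw [GenQuad.levi, SimpleGraph.fromRel_adj] at h
  exact h.2

private lemma levi_step_l {x y : Q.P ⊕ Q.L} (h : Q.levi.Adj x y) {p : Q.P}
    (hx : x = Sum.inl p) : ∃ l, y = Sum.inr l ∧ Q.inc p l := by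
  rcases levi_adj_cases Q h with ⟨p', l, e1, e2, hi⟩ | ⟨p', l, e1, e2, hi⟩
  · cases Sum.inl.inj (e1.symm.trans hx); exact ⟨l, e2, hi⟩
  · rw [hx] at e2; simp at e2

private lemma levi_step_r {x y : Q.P ⊕ Q.L} (h : Q.levi.Adj x y) {l : Q.L}
    (hx : x = Sum.inr l) : ∃ p, y = Sum.inl p ∧ Q.inc p l := by
  rcases levi_adj_cases Q h with ⟨p', l', e1, e2, hi⟩ | ⟨p', l', e1, e2, hi⟩
  · rw [hx] at e1; simp at e1
  · cases Sum.inr.inj (e2.symm.trans hx); exact ⟨p', e1, hi⟩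

end GQHelpers

/-- Under the hypotheses of the matching construction (`t`-regular induced subgraph `G`
of the Levi graph of a `GQ(s,s)`, deleteable set `W` removed, perfect matching `newE` of
the degree-`(t-1)` vertices added along deleted lines/points), every 6-cycle of the
resulting graph `Γ` contains exactly two new (matching) edges, and up to relabelling its
vertex sequence is `u₁v₂v₃u₄v₅v₆` or `u₁v₂v₃u₄u₅v₆`, where the `u`-vertices are all of
one type (point or line) and the `v`-vertices all of the other type. -/
theorem matching_extension_six_cycles {s t : ℕ} (Q : GenQuad s t)
    [Fintype Q.P] [Fintype Q.L]
    (hst : t ≤ s + 1) (ht : Odd t)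
    (V : Set (Q.P ⊕ Q.L)) (W : Set V)
    (hreg : ∀ v : V, Nat.card ((Q.levi.induce V).neighborSet v) = t)
    (hW : Q.Deleteable V W)
    (newE : ↥(Wᶜ) → ↥(Wᶜ) → Prop)
    (hmatch : ∀ x y z, (SimpleGraph.fromRel newE).Adj x y →
      (SimpleGraph.fromRel newE).Adj x z → y = z)
    (hcover : ∀ x : ↥(Wᶜ), (∃ y, (SimpleGraph.fromRel newE).Adj x y) ↔
      Nat.card (((Q.levi.induce V).induce Wᶜ).neighborSet x) = t - 1)
    (hgeom : ∀ x y : ↥(Wᶜ), (SimpleGraph.fromRel newE).Adj x y →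
      (∃ (p₁ p₂ : Q.P) (l : Q.L) (hl : Sum.inr l ∈ V),
        x.1.1 = Sum.inl p₁ ∧ y.1.1 = Sum.inl p₂ ∧ (⟨Sum.inr l, hl⟩ : V) ∈ W ∧
        Q.inc p₁ l ∧ Q.inc p₂ l) ∨
      (∃ (l₁ l₂ : Q.L) (p : Q.P) (hp : Sum.inl p ∈ V),
        x.1.1 = Sum.inr l₁ ∧ y.1.1 = Sum.inr l₂ ∧ (⟨Sum.inl p, hp⟩ : V) ∈ W ∧
        Q.inc p l₁ ∧ Q.inc p l₂)) :
    -- every 6-cycle `v 0, v 1, ..., v 5` of `Γ`: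
    ∀ v : Fin 6 → ↥(Wᶜ), Function.Injective v →
      (∀ i : Fin 6,
        (((Q.levi.induce V).induce Wᶜ) ⊔ SimpleGraph.fromRel newE).Adj (v i) (v (i + 1))) →
      -- contains exactly two new (matching) edges, and
      Nat.card {i : Fin 6 // ¬ ((Q.levi.induce V).induce Wᶜ).Adj (v i) (v (i + 1))} = 2 ∧
      -- can be written as `u₁v₂v₃u₄v₅v₆` or `u₁v₂v₃u₄u₅v₆`:
      ∃ w : Fin 6 → ↥(Wᶜ), Set.range w = Set.range v ∧ Function.Injective w ∧
        (∀ i : Fin 6,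
          (((Q.levi.induce V).induce Wᶜ) ⊔ SimpleGraph.fromRel newE).Adj (w i) (w (i + 1))) ∧
        -- pattern u v v u v v (u's of one type, v's of the other)
        ((((∃ p, (w 0).1.1 = Sum.inl p) ∧ (∃ p, (w 3).1.1 = Sum.inl p) ∧
            (∀ i : Fin 6, i = 1 ∨ i = 2 ∨ i = 4 ∨ i = 5 → ∃ l, (w i).1.1 = Sum.inr l)) ∨
          ((∃ l, (w 0).1.1 = Sum.inr l) ∧ (∃ l, (w 3).1.1 = Sum.inr l) ∧
            (∀ i : Fin 6, i = 1 ∨ i = 2 ∨ i = 4 ∨ i = 5 → ∃ p, (w i).1.1 = Sum.inl p))) ∨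
        -- or pattern u v v u u v
         (((∀ i : Fin 6, i = 0 ∨ i = 3 ∨ i = 4 → ∃ p, (w i).1.1 = Sum.inl p) ∧
            (∀ i : Fin 6, i = 1 ∨ i = 2 ∨ i = 5 → ∃ l, (w i).1.1 = Sum.inr l)) ∨
          ((∀ i : Fin 6, i = 0 ∨ i = 3 ∨ i = 4 → ∃ l, (w i).1.1 = Sum.inr l) ∧
            (∀ i : Fin 6, i = 1 ∨ i = 2 ∨ i = 5 → ∃ p, (w i).1.1 = Sum.inl p)))) := by
  classical
  intro v hinj hC
  set Γo : SimpleGraph ↥(Wᶜ) := ((Q.levi.induce V).induce Wᶜ) with hΓo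
  set Γn : SimpleGraph ↥(Wᶜ) := SimpleGraph.fromRel newE with hΓn
  set b : Fin 6 → Bool := fun i => ((v i).1.1).isLeft with hbdef
  set c : Fin 6 → Bool := fun i => decide (Γn.Adj (v i) (v (i+1))) with hcdef
  have hOldAdj : ∀ x y : ↥(Wᶜ), Γo.Adj x y → Q.levi.Adj x.1.1 y.1.1 := by
    intro x y h
    rw [hΓo] at h
    simpa [SimpleGraph.induce, SimpleGraph.comap] using h
  have hcNew : ∀ i, c i = true ↔ Γn.Adj (v i) (v (i+1)) := by
    intro i
    simp only [hcdef]
    exact decide_eq_true_iff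
  have hbOld : ∀ i, Γo.Adj (v i) (v (i+1)) → b (i+1) = !(b i) := by
    intro i h
    rcases levi_adj_cases Q (hOldAdj _ _ h) with ⟨p, l, e1, e2, _⟩ | ⟨p, l, e1, e2, _⟩ <;>
      simp [hbdef, e1, e2]
  have hbNew : ∀ i, Γn.Adj (v i) (v (i+1)) → b (i+1) = b i := by
    intro i h
    rcases hgeom _ _ h with ⟨p1, p2, l, hl, e1, e2, _⟩ | ⟨l1, l2, p, hp, e1, e2, _⟩ <;>
      simp [hbdef, e1, e2]
  have hEdge : ∀ i, Γo.Adj (v i) (v (i+1)) ∨ Γn.Adj (v i) (v (i+1)) := by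
    intro i
    have := hC i
    rwa [SimpleGraph.sup_adj] at this
  have hNewNotOld : ∀ i, Γn.Adj (v i) (v (i+1)) → ¬ Γo.Adj (v i) (v (i+1)) := by
    intro i hn ho
    have h1 := hbNew i hn
    have h2 := hbOld i ho
    rw [h1] at h2
    simp at h2
  have hb : ∀ i, b (i+1) = cond (c i) (b i) (!(b i)) := by
    intro i
    by_cases h : Γn.Adj (v i) (v (i+1))
    · have hc1 : c i = true := (hcNew i).mpr h
      rw [hc1]
      exact hbNew i h
    · have hc1 : c i = false := by
        simp only [hcdef]
        exact decide_eq_false h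
      rw [hc1]
      exact hbOld i ((hEdge i).resolve_right h)
  have hnc : ∀ i, c i = true → c (i+1) = true → False := by
    intro i h1 h2
    have a1 := (hcNew i).mp h1
    have a2 := (hcNew (i+1)).mp h2
    exact fin6_ne_add2 i (hinj (hmatch (v (i+1)) (v i) (v (i+1+1)) a1.symm a2))
  have hne : ∃ i, c i = true := by
    by_contra hno
    push_neg at hno
    have hall : ∀ i, Γo.Adj (v i) (v (i+1)) := fun i =>
      (hEdge i).resolve_right (fun hn => hno i ((hcNew i).mpr hn))
    have hvne : ∀ i j : Fin 6, i ≠ j → (v i).1.1 ≠ (v j).1.1 := fun i j hij e =>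
      hij (hinj (Subtype.ext (Subtype.ext e)))
    have hL : ∀ i : Fin 6, Q.levi.Adj (v i).1.1 (v (i+1)).1.1 := fun i => hOldAdj _ _ (hall i)
    have hL01 : Q.levi.Adj (v 0).1.1 (v 1).1.1 := by
      have := hL 0; rwa [show (0:Fin 6)+1 = 1 by decide] at this
    have hL12 : Q.levi.Adj (v 1).1.1 (v 2).1.1 := by
      have := hL 1; rwa [show (1:Fin 6)+1 = 2 by decide] at this
    have hL23 : Q.levi.Adj (v 2).1.1 (v 3).1.1 := by
      have := hL 2; rwa [show (2:Fin 6)+1 = 3 by decide] at this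
    have hL34 : Q.levi.Adj (v 3).1.1 (v 4).1.1 := by
      have := hL 3; rwa [show (3:Fin 6)+1 = 4 by decide] at this
    have hL45 : Q.levi.Adj (v 4).1.1 (v 5).1.1 := by
      have := hL 4; rwa [show (4:Fin 6)+1 = 5 by decide] at this
    have hL50 : Q.levi.Adj (v 5).1.1 (v 0).1.1 := by
      have := hL 5; rwa [show (5:Fin 6)+1 = 0 by decide] at this
    rcases e0 : (v 0).1.1 with p1 | l1
    · obtain ⟨l1, e1, i1⟩ := levi_step_l Q hL01 e0
      obtain ⟨p2, e2, i2⟩ := levi_step_r Q hL12 e1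
      obtain ⟨l2, e3, i3⟩ := levi_step_l Q hL23 e2
      obtain ⟨p3, e4, i4⟩ := levi_step_r Q hL34 e3
      obtain ⟨l3, e5, i5⟩ := levi_step_l Q hL45 e4
      obtain ⟨p1', e6, i6⟩ := levi_step_r Q hL50 e5
      cases Sum.inl.inj (e6.symm.trans e0)
      have hp23 : p2 ≠ p3 := fun e => hvne 2 4 (by decide) (by rw [e2, e4, e])
      have hl12 : l1 ≠ l2 := fun e => hvne 1 3 (by decide) (by rw [e1, e3, e])
      have hl23 : l2 ≠ l3 := fun e => hvne 3 5 (by decide) (by rw [e3, e5, e])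
      exact gq_hex Q hp23 hl12 hl23 i1 i2 i3 i4 i5 i6
    · obtain ⟨p1, e1, i1⟩ := levi_step_r Q hL01 e0
      obtain ⟨l2, e2, i2⟩ := levi_step_l Q hL12 e1
      obtain ⟨p2, e3, i3⟩ := levi_step_r Q hL23 e2
      obtain ⟨l3, e4, i4⟩ := levi_step_l Q hL34 e3
      obtain ⟨p3, e5, i5⟩ := levi_step_r Q hL45 e4
      obtain ⟨l1', e6, i6⟩ := levi_step_l Q hL50 e5
      cases Sum.inr.inj (e6.symm.trans e0)
      have hp32 : p3 ≠ p2 := fun e => hvne 5 3 (by decide) (by rw [e5, e3, e])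
      have hl13 : l1 ≠ l3 := fun e => hvne 0 4 (by decide) (by rw [e0, e4, e])
      have hl32 : l3 ≠ l2 := fun e => hvne 4 2 (by decide) (by rw [e4, e2, e])
      exact gq_hex Q hp32 hl13 hl32 i1 i6 i5 i4 i3 i2
  obtain ⟨k, hk⟩ := comb_aux c b hb hnc hne
  have hoff : ∀ a a' : Fin 6, (k + a = k + a') ↔ a = a' :=
    fun a a' => ⟨fun h => add_left_cancel h, fun h => by rw [h]⟩
  have toL : ∀ i : Fin 6, b i = true → ∃ p, (v i).1.1 = Sum.inl p := by
    intro i h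
    rw [hbdef] at h
    exact Sum.isLeft_iff.mp h
  have toR : ∀ i : Fin 6, b i = false → ∃ l, (v i).1.1 = Sum.inr l := by
    intro i h
    rcases hx : (v i).1.1 with p | l
    · exfalso; simp [hbdef, hx] at h
    · exact ⟨l, rfl⟩
  have hwrange : Set.range (fun i => v (i + k)) = Set.range v := by
    ext x
    simp only [Set.mem_range]
    constructor
    · rintro ⟨i, rfl⟩; exact ⟨i + k, rfl⟩
    · rintro ⟨i, rfl⟩; exact ⟨i - k, by rw [sub_add_cancel]⟩
  have hwinj : Function.Injective (fun i : Fin 6 => v (i + k)) := by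
    intro i j h
    exact add_right_cancel (hinj h)
  have hwadj : ∀ i : Fin 6, (Γo ⊔ Γn).Adj (v (i + k)) (v (i + 1 + k)) := by
    intro i
    rw [add_right_comm i 1 k]
    exact hC (i + k)
  have n2 : k + 1 + 1 = k + 2 := by rw [add_assoc]; rfl
  have n3 : k + 2 + 1 = k + 3 := by rw [add_assoc]; rfl
  have n4 : k + 3 + 1 = k + 4 := by rw [add_assoc]; rfl
  have n5 : k + 4 + 1 = k + 5 := by rw [add_assoc]; rfl
  rcases hk with hk | hk
  · -- new edges at k+1 and k+4 : pattern u v v u v v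
    have hcv : ∀ a : Fin 6, c (k + a) = (decide (a = 1) || decide (a = 4)) := by
      intro a
      rw [hk (k + a), decide_eq_decide.mpr (hoff a 1), decide_eq_decide.mpr (hoff a 4)]
    have ck0 : c k = false := by
      have h := hcv 0; rw [add_zero] at h; rw [h]; decide
    have ck1 : c (k+1) = true := by rw [hcv 1]; decide
    have ck2 : c (k+2) = false := by rw [hcv 2]; decide
    have ck3 : c (k+3) = false := by rw [hcv 3]; decide
    have ck4 : c (k+4) = true := by rw [hcv 4]; decide
    have t1 : b (k+1) = !(b k) := by have h := hb k; rw [ck0] at h; exact h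
    have t2 : b (k+2) = b (k+1) := by have h := hb (k+1); rw [n2, ck1] at h; exact h
    have t3 : b (k+3) = !(b (k+2)) := by have h := hb (k+2); rw [n3, ck2] at h; exact h
    have t4 : b (k+4) = !(b (k+3)) := by have h := hb (k+3); rw [n4, ck3] at h; exact h
    have t5 : b (k+5) = b (k+4) := by have h := hb (k+4); rw [n5, ck4] at h; exact h
    have b1 : b (k+1) = !(b k) := t1
    have b2 : b (k+2) = !(b k) := by rw [t2, t1]
    have b3 : b (k+3) = b k := by rw [t3, b2, Bool.not_not]
    have b4 : b (k+4) = !(b k) := by rw [t4, b3]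
    have b5 : b (k+5) = !(b k) := by rw [t5, b4]
    constructor
    · have hset : {i : Fin 6 | ¬ Γo.Adj (v i) (v (i+1))} = {k+1, k+4} := by
        ext i
        simp only [Set.mem_setOf_eq, Set.mem_insert_iff, Set.mem_singleton_iff]
        constructor
        · intro h
          have hn := (hEdge i).resolve_left h
          have hci := (hcNew i).mpr hn
          rw [hk i] at hci
          simpa using hci
        · intro h
          have hci : c i = true := by rw [hk i]; rcases h with rfl | rfl <;> simp
          exact hNewNotOld i ((hcNew i).mp hci)
      have : ({i : Fin 6 | ¬ Γo.Adj (v i) (v (i+1))} : Set (Fin 6)).ncard = 2 := by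
        rw [hset]
        exact Set.ncard_pair (fun h => absurd ((hoff 1 4).mp h) (by decide))
      exact this
    · refine ⟨fun i => v (i + k), hwrange, hwinj, hwadj, ?_⟩
      cases hB : b k
      · refine Or.inl (Or.inr ⟨?_, ?_, ?_⟩)
        · show ∃ l, (v (0 + k)).1.1 = Sum.inr l
          rw [zero_add]; exact toR k hB
        · show ∃ l, (v (3 + k)).1.1 = Sum.inr l
          rw [add_comm]; exact toR (k+3) (by rw [b3, hB])
        · intro i hi
          rcases hi with rfl | rfl | rfl | rfl
          · show ∃ p, (v (1 + k)).1.1 = Sum.inl p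
            rw [add_comm]; exact toL (k+1) (by rw [b1, hB]; rfl)
          · show ∃ p, (v (2 + k)).1.1 = Sum.inl p
            rw [add_comm]; exact toL (k+2) (by rw [b2, hB]; rfl)
          · show ∃ p, (v (4 + k)).1.1 = Sum.inl p
            rw [add_comm]; exact toL (k+4) (by rw [b4, hB]; rfl)
          · show ∃ p, (v (5 + k)).1.1 = Sum.inl p
            rw [add_comm]; exact toL (k+5) (by rw [b5, hB]; rfl)
      · refine Or.inl (Or.inl ⟨?_, ?_, ?_⟩)
        · show ∃ p, (v (0 + k)).1.1 = Sum.inl p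
          rw [zero_add]; exact toL k hB
        · show ∃ p, (v (3 + k)).1.1 = Sum.inl p
          rw [add_comm]; exact toL (k+3) (by rw [b3, hB])
        · intro i hi
          rcases hi with rfl | rfl | rfl | rfl
          · show ∃ l, (v (1 + k)).1.1 = Sum.inr l
            rw [add_comm]; exact toR (k+1) (by rw [b1, hB]; rfl)
          · show ∃ l, (v (2 + k)).1.1 = Sum.inr l
            rw [add_comm]; exact toR (k+2) (by rw [b2, hB]; rfl)
          · show ∃ l, (v (4 + k)).1.1 = Sum.inr l
            rw [add_comm]; exact toR (k+4) (by rw [b4, hB]; rfl)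
          · show ∃ l, (v (5 + k)).1.1 = Sum.inr l
            rw [add_comm]; exact toR (k+5) (by rw [b5, hB]; rfl)
  · -- new edges at k+1 and k+3 : pattern u v v u u v
    have hcv : ∀ a : Fin 6, c (k + a) = (decide (a = 1) || decide (a = 3)) := by
      intro a
      rw [hk (k + a), decide_eq_decide.mpr (hoff a 1), decide_eq_decide.mpr (hoff a 3)]
    have ck0 : c k = false := by
      have h := hcv 0; rw [add_zero] at h; rw [h]; decide
    have ck1 : c (k+1) = true := by rw [hcv 1]; decide
    have ck2 : c (k+2) = false := by rw [hcv 2]; decide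
    have ck3 : c (k+3) = true := by rw [hcv 3]; decide
    have ck4 : c (k+4) = false := by rw [hcv 4]; decide
    have t1 : b (k+1) = !(b k) := by have h := hb k; rw [ck0] at h; exact h
    have t2 : b (k+2) = b (k+1) := by have h := hb (k+1); rw [n2, ck1] at h; exact h
    have t3 : b (k+3) = !(b (k+2)) := by have h := hb (k+2); rw [n3, ck2] at h; exact h
    have t4 : b (k+4) = b (k+3) := by have h := hb (k+3); rw [n4, ck3] at h; exact h
    have t5 : b (k+5) = !(b (k+4)) := by have h := hb (k+4); rw [n5, ck4] at h; exact h
    have b1 : b (k+1) = !(b k) := t1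
    have b2 : b (k+2) = !(b k) := by rw [t2, t1]
    have b3 : b (k+3) = b k := by rw [t3, b2, Bool.not_not]
    have b4 : b (k+4) = b k := by rw [t4, b3]
    have b5 : b (k+5) = !(b k) := by rw [t5, b4]
    constructor
    · have hset : {i : Fin 6 | ¬ Γo.Adj (v i) (v (i+1))} = {k+1, k+3} := by
        ext i
        simp only [Set.mem_setOf_eq, Set.mem_insert_iff, Set.mem_singleton_iff]
        constructor
        · intro h
          have hn := (hEdge i).resolve_left h
          have hci := (hcNew i).mpr hn
          rw [hk i] at hci
          simpa using hci
        · intro h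
          have hci : c i = true := by rw [hk i]; rcases h with rfl | rfl <;> simp
          exact hNewNotOld i ((hcNew i).mp hci)
      have : ({i : Fin 6 | ¬ Γo.Adj (v i) (v (i+1))} : Set (Fin 6)).ncard = 2 := by
        rw [hset]
        exact Set.ncard_pair (fun h => absurd ((hoff 1 3).mp h) (by decide))
      exact this
    · refine ⟨fun i => v (i + k), hwrange, hwinj, hwadj, ?_⟩
      cases hB : b k
      · refine Or.inr (Or.inr ⟨?_, ?_⟩)
        · intro i hi
          rcases hi with rfl | rfl | rfl
          · show ∃ l, (v (0 + k)).1.1 = Sum.inr l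
            rw [zero_add]; exact toR k hB
          · show ∃ l, (v (3 + k)).1.1 = Sum.inr l
            rw [add_comm]; exact toR (k+3) (by rw [b3, hB])
          · show ∃ l, (v (4 + k)).1.1 = Sum.inr l
            rw [add_comm]; exact toR (k+4) (by rw [b4, hB])
        · intro i hi
          rcases hi with rfl | rfl | rfl
          · show ∃ p, (v (1 + k)).1.1 = Sum.inl p
            rw [add_comm]; exact toL (k+1) (by rw [b1, hB]; rfl)
          · show ∃ p, (v (2 + k)).1.1 = Sum.inl p
            rw [add_comm]; exact toL (k+2) (by rw [b2, hB]; rfl)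
          · show ∃ p, (v (5 + k)).1.1 = Sum.inl p
            rw [add_comm]; exact toL (k+5) (by rw [b5, hB]; rfl)
      · refine Or.inr (Or.inl ⟨?_, ?_⟩)
        · intro i hi
          rcases hi with rfl | rfl | rfl
          · show ∃ p, (v (0 + k)).1.1 = Sum.inl p
            rw [zero_add]; exact toL k hB
          · show ∃ p, (v (3 + k)).1.1 = Sum.inl p
            rw [add_comm]; exact toL (k+3) (by rw [b3, hB])
          · show ∃ p, (v (4 + k)).1.1 = Sum.inl p
            rw [add_comm]; exact toL (k+4) (by rw [b4, hB])
        · intro i hi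
          rcases hi with rfl | rfl | rfl
          · show ∃ l, (v (1 + k)).1.1 = Sum.inr l
            rw [add_comm]; exact toR (k+1) (by rw [b1, hB]; rfl)
          · show ∃ l, (v (2 + k)).1.1 = Sum.inr l
            rw [add_comm]; exact toR (k+2) (by rw [b2, hB]; rfl)
          · show ∃ l, (v (5 + k)).1.1 = Sum.inr l
            rw [add_comm]; exact toR (k+5) (by rw [b5, hB]; rfl)
end

section
/- For every prime power q ≥ 7, there exists a q-regular graph of girth exactly 7 on 2q³ − 2q vertices; consequently n(q,7) ≤ 2q³ − 2q. -/
namespace Cage7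


variable {F : Type} [Field F]

/-- incidence of point (x,y,z) with line (t,b,c): y = t x + b, z = t² x + c. -/
def incid (p l : F × F × F) : Prop :=
  p.2.1 = l.1 * p.1 + l.2.1 ∧ p.2.2 = l.1 * l.1 * p.1 + l.2.2

/-- lines deleted from the construction: slope 0 or 1, lying in the plane z = y -/
def deleted (l : F × F × F) : Prop := (l.1 = 0 ∨ l.1 = 1) ∧ l.2.2 = l.2.1

/-- points of the secant plane z = y -/
def isPi (p : F × F × F) : Prop := p.2.2 = p.2.1

lemma incid_x_eq {p p' l : F × F × F} (h : incid p l) (h' : incid p' l)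
    (hx : p.1 = p'.1) : p = p' := by
  obtain ⟨h1, h2⟩ := h; obtain ⟨h1', h2'⟩ := h'
  have : p.2.1 = p'.2.1 := by rw [h1, h1', hx]
  have : p.2.2 = p'.2.2 := by rw [h2, h2', hx]
  ext <;> assumption

lemma slope_point_unique {p l l' : F × F × F} (h : incid p l) (h' : incid p l')
    (ht : l.1 = l'.1) : l = l' := by
  obtain ⟨h1, h2⟩ := h; obtain ⟨h1', h2'⟩ := h'
  have hb : l.2.1 = l'.2.1 := by
    have := h1.symm.trans h1'
    rw [ht] at this
    linear_combination this
  have hc : l.2.2 = l'.2.2 := by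
    have := h2.symm.trans h2'
    rw [ht] at this
    linear_combination this
  ext <;> assumption

lemma line_unique {p p' l l' : F × F × F} (h1 : incid p l) (h2 : incid p' l)
    (h3 : incid p l') (h4 : incid p' l') (hne : p ≠ p') : l = l' := by
  have hx : p.1 ≠ p'.1 := fun hx => hne (incid_x_eq h1 h2 hx)
  have ht : l.1 = l'.1 := by
    have e1 : p.2.1 - p'.2.1 = l.1 * (p.1 - p'.1) := by
      linear_combination h1.1 - h2.1
    have e2 : p.2.1 - p'.2.1 = l'.1 * (p.1 - p'.1) := by
      linear_combination h3.1 - h4.1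
    have := e1.symm.trans e2
    exact mul_right_cancel₀ (sub_ne_zero.mpr hx) this
  exact slope_point_unique h1 h3 ht

lemma pi_slope {p l : F × F × F} (hp : isPi p) (h : incid p l) (hl : ¬ deleted l) :
    l.1 ≠ 0 ∧ l.1 ≠ 1 := by
  constructor
  · rintro rfl0
    apply hl
    refine ⟨Or.inl rfl0, ?_⟩
    have h1 := h.1; have h2 := h.2
    rw [rfl0] at h1 h2
    simp at h1 h2
    rw [← h1, ← h2]; exact hp
  · intro rfl1
    apply hl
    refine ⟨Or.inr rfl1, ?_⟩
    have h1 := h.1; have h2 := h.2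
    rw [rfl1] at h1 h2
    have : p.2.2 = p.2.1 := hp
    linear_combination this - h2 + h1

lemma no_two_pi {p p' l : F × F × F} (hp : isPi p) (hp' : isPi p') (h : incid p l)
    (h' : incid p' l) (hl : ¬ deleted l) : p = p' := by
  by_cases hx : p.1 = p'.1
  · exact incid_x_eq h h' hx
  · exfalso
    have ⟨ht0, ht1⟩ := pi_slope hp h hl
    have e1 : p.2.1 - p'.2.1 = l.1 * (p.1 - p'.1) := by linear_combination h.1 - h'.1
    have e2 : p.2.2 - p'.2.2 = l.1 * l.1 * (p.1 - p'.1) := by linear_combination h.2 - h'.2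
    have hzz : p.2.2 - p'.2.2 = p.2.1 - p'.2.1 := by rw [hp, hp']
    have : l.1 * (l.1 - 1) * (p.1 - p'.1) = 0 := by linear_combination e1 - e2 + hzz
    rcases mul_eq_zero.mp this with h0 | h0
    · rcases mul_eq_zero.mp h0 with h0 | h0
      · exact ht0 h0
      · exact ht1 (by linear_combination h0)
    · exact hx (sub_eq_zero.mp h0)

/-- no path of length 4 between two distinct points of the plane with the same y
(through remaining lines). -/
lemma no_four_path {p p' m l l' : F × F × F} (hp : isPi p) (hp' : isPi p')
    (hy : p.2.1 = p'.2.1) (hpp' : p ≠ p') (hll' : l ≠ l')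
    (hl : ¬ deleted l) (hl' : ¬ deleted l')
    (h1 : incid p l) (h2 : incid m l) (h3 : incid m l') (h4 : incid p' l')
    (hmp : m ≠ p) (hmp' : m ≠ p') : False := by
  have ⟨ht0, _⟩ := pi_slope hp h1 hl
  have ⟨hs0, _⟩ := pi_slope hp' h4 hl'
  have hts : l.1 ≠ l'.1 := fun h => hll' (slope_point_unique h2 h3 h)
  have hα : m.1 - p.1 ≠ 0 := fun h => hmp (incid_x_eq h2 h1 (sub_eq_zero.mp h))
  have hβ : m.1 - p'.1 ≠ 0 := fun h => hmp' (incid_x_eq h3 h4 (sub_eq_zero.mp h))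
  have e1 : m.2.1 - p.2.1 = l.1 * (m.1 - p.1) := by linear_combination h2.1 - h1.1
  have e2 : m.2.2 - p.2.2 = l.1 * l.1 * (m.1 - p.1) := by linear_combination h2.2 - h1.2
  have e3 : m.2.1 - p'.2.1 = l'.1 * (m.1 - p'.1) := by linear_combination h3.1 - h4.1
  have e4 : m.2.2 - p'.2.2 = l'.1 * l'.1 * (m.1 - p'.1) := by linear_combination h3.2 - h4.2
  -- using z_p = y_p, z_p' = y_p', y_p = y_p'
  -- tα = sβ and t²α = s²β
  have hp2 : p.2.2 = p.2.1 := hp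
  have hp2' : p'.2.2 = p'.2.1 := hp'
  have k1 : l.1 * (m.1 - p.1) = l'.1 * (m.1 - p'.1) := by
    linear_combination e3 - e1 - hy
  have k2 : l.1 * l.1 * (m.1 - p.1) = l'.1 * l'.1 * (m.1 - p'.1) := by
    linear_combination e4 - e2 - hp2 + hp2' - hy
  have : l.1 * (m.1 - p.1) * (l.1 - l'.1) = 0 := by linear_combination k2 - l'.1 * k1
  rcases mul_eq_zero.mp this with h0 | h0
  · rcases mul_eq_zero.mp h0 with h0 | h0
    · exact ht0 h0
    · exact hα h0
  · exact hts (sub_eq_zero.mp h0)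

/-- Vandermonde: no triangle of three distinct lines pairwise meeting in distinct points. -/
lemma no_triangle {p1 p2 p3 l1 l2 l3 : F × F × F}
    (h11 : incid p1 l1) (h21 : incid p2 l1) (h22 : incid p2 l2) (h32 : incid p3 l2)
    (h33 : incid p3 l3) (h13 : incid p1 l3)
    (hp12 : p1 ≠ p2) (hp23 : p2 ≠ p3) (hp13 : p1 ≠ p3)
    (hl12 : l1 ≠ l2) (hl23 : l2 ≠ l3) (hl13 : l1 ≠ l3) : False := by
  have ha : p2.1 - p1.1 ≠ 0 := fun h => hp12 (incid_x_eq h21 h11 (sub_eq_zero.mp h)).symm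
  have hb : p3.1 - p2.1 ≠ 0 := fun h => hp23 (incid_x_eq h32 h22 (sub_eq_zero.mp h)).symm
  have hc : p1.1 - p3.1 ≠ 0 := fun h => hp13 (incid_x_eq h13 h33 (sub_eq_zero.mp h))
  have ht12 : l1.1 ≠ l2.1 := fun h => hl12 (slope_point_unique h21 h22 h)
  have ht23 : l2.1 ≠ l3.1 := fun h => hl23 (slope_point_unique h32 h33 h)
  have ht13 : l1.1 ≠ l3.1 := fun h => hl13 (slope_point_unique h11 h13 h)
  set t1 := l1.1; set t2 := l2.1; set t3 := l3.1
  set a := p2.1 - p1.1; set b := p3.1 - p2.1; set c := p1.1 - p3.1 with hcdef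
  have eq1 : a + b + c = 0 := by simp [a, b, c]
  have eq2 : t1 * a + t2 * b + t3 * c = 0 := by
    have f1 : p2.2.1 - p1.2.1 = t1 * a := by linear_combination h21.1 - h11.1
    have f2 : p3.2.1 - p2.2.1 = t2 * b := by linear_combination h32.1 - h22.1
    have f3 : p1.2.1 - p3.2.1 = t3 * c := by linear_combination h13.1 - h33.1
    linear_combination -f1 - f2 - f3
  have eq3 : t1 * t1 * a + t2 * t2 * b + t3 * t3 * c = 0 := by
    have f1 : p2.2.2 - p1.2.2 = t1 * t1 * a := by linear_combination h21.2 - h11.2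
    have f2 : p3.2.2 - p2.2.2 = t2 * t2 * b := by linear_combination h32.2 - h22.2
    have f3 : p1.2.2 - p3.2.2 = t3 * t3 * c := by linear_combination h13.2 - h33.2
    linear_combination -f1 - f2 - f3
  have key : c * (t3 - t1) * (t3 - t2) = 0 := by
    linear_combination eq3 - (t1 + t2) * eq2 + t1 * t2 * eq1
  rcases mul_eq_zero.mp key with h0 | h0
  · rcases mul_eq_zero.mp h0 with h0 | h0
    · exact hc h0
    · exact ht13 (sub_eq_zero.mp h0).symm
  · exact ht23 (sub_eq_zero.mp h0).symm



open SimpleGraph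

lemma getVert_eq_support_getElem {α : Type*} {G : SimpleGraph α} {u v : α} (w : G.Walk u v) :
    ∀ (i : ℕ) (hi : i ≤ w.length),
      w.getVert i = w.support[i]'(by rw [Walk.length_support]; omega) := by
  induction w with
  | nil =>
    intro i hi
    simp only [Walk.length_nil, Nat.le_zero] at hi
    subst hi
    rfl
  | cons h p ih =>
    intro i hi
    cases i with
    | zero => rfl
    | succ n =>
      simp only [Walk.support_cons, Walk.getVert_cons_succ, List.getElem_cons_succ]
      exact ih n (by simpa [Walk.length_cons] using hi)

lemma cycle_getVert_inj {α : Type*} {G : SimpleGraph α} {u : α} {w : G.Walk u u}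
    (hw : w.IsCycle) {i j : ℕ} (hi : i < w.length) (hj : j < w.length)
    (h : w.getVert i = w.getVert j) : i = j := by
  have hnd : w.support.tail.Nodup := hw.2
  have hlen : w.support.length = w.length + 1 := Walk.length_support w
  have htl : w.support.tail.length = w.length := by
    rw [List.length_tail, hlen]
    omega
  have hget : ∀ (k : ℕ) (hk1 : 1 ≤ k) (hk : k ≤ w.length),
      w.getVert k = w.support.tail[k-1]'(by omega) := by
    intro k hk1 hk
    obtain ⟨k', rfl⟩ : ∃ k', k = k' + 1 := ⟨k - 1, by omega⟩
    rw [getVert_eq_support_getElem w (k'+1) hk]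
    simp only [Nat.add_sub_cancel, List.getElem_tail]
  have h0 : w.getVert 0 = u := Walk.getVert_zero w
  have hL : w.getVert w.length = u := Walk.getVert_length w
  have h3 := hw.three_le_length
  rcases Nat.eq_zero_or_pos i with rfl | hi1 <;> rcases Nat.eq_zero_or_pos j with rfl | hj1
  · rfl
  · exfalso
    have h1 : w.support.tail[j-1]'(by omega) = u := by rw [← hget j hj1 (le_of_lt hj), ← h, h0]
    have h2 : w.support.tail[w.length-1]'(by omega) = u := by
      rw [← hget w.length (by omega) le_rfl, hL]
    have := (hnd.getElem_inj_iff).mp (h1.trans h2.symm)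
    omega
  · exfalso
    have h1 : w.support.tail[i-1]'(by omega) = u := by rw [← hget i hi1 (le_of_lt hi), h, h0]
    have h2 : w.support.tail[w.length-1]'(by omega) = u := by
      rw [← hget w.length (by omega) le_rfl, hL]
    have := (hnd.getElem_inj_iff).mp (h1.trans h2.symm)
    omega
  · have h1 := hget i hi1 (le_of_lt hi)
    have h2 := hget j hj1 (le_of_lt hj)
    rw [h1, h2] at h
    have := (hnd.getElem_inj_iff).mp h
    omega

lemma length_rotate' {α : Type*} [DecidableEq α] {G : SimpleGraph α} {u v : α} (w : G.Walk v v)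
    (h : u ∈ w.support) : (w.rotate u h).length = w.length := by
  have h1 := (Walk.rotate_darts w u h).perm.length_eq
  rwa [Walk.length_darts, Walk.length_darts] at h1

lemma zmod_no_short_cycle {q ℓ : ℕ} (hq : 7 ≤ q) (hl3 : 3 ≤ ℓ) (hl6 : ℓ ≤ 6)
    (d : ℕ → ZMod q)
    (hstep : ∀ i < ℓ, d (i+1) = d i + 1 ∨ d i = d (i+1) + 1)
    (hclose : d ℓ = d 0)
    (hinj : ∀ i j, i < ℓ → j < ℓ → d i = d j → i = j) : False := by
  haveI : NeZero q := ⟨by omega⟩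
  have hcast : ∀ k : ℕ, 0 < k → k ≤ 6 → ((k : ZMod q) ≠ 0) := by
    intro k hk1 hk6 hk0
    have := (ZMod.natCast_eq_zero_iff k q).mp hk0
    have := Nat.le_of_dvd hk1 this
    omega
  set P : ℕ → Prop := fun i => d (i+1) = d i + 1 with hP
  have hexcl : ∀ i < ℓ, ¬ P i → d i = d (i+1) + 1 := by
    intro i hi hPi
    rcases hstep i hi with h | h
    · exact absurd h hPi
    · exact h
  by_cases hconst : (∀ i < ℓ, P i) ∨ (∀ i < ℓ, ¬ P i)
  · rcases hconst with hall | hall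
    · have key : ∀ i ≤ ℓ, d i = d 0 + (i : ZMod q) := by
        intro i hi
        induction i with
        | zero => simp
        | succ n ih =>
          have hs : d (n+1) = d n + 1 := hall n (by omega)
          rw [hs, ih (by omega)]
          push_cast
          ring
      have h1 := (key ℓ le_rfl).symm.trans hclose
      have h2 : ((ℓ : ZMod q)) = 0 := by linear_combination h1
      exact hcast ℓ (by omega) hl6 h2
    · have key : ∀ i ≤ ℓ, d i = d 0 - (i : ZMod q) := by
        intro i hi
        induction i with
        | zero => simp
        | succ n ih =>
          have hs : d n = d (n+1) + 1 := hexcl n (by omega) (hall n (by omega))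
          rw [ih (by omega)] at hs
          push_cast
          linear_combination -hs
      have h1 := (key ℓ le_rfl).symm.trans hclose
      have h2 : ((ℓ : ZMod q)) = 0 := by linear_combination -h1
      exact hcast ℓ (by omega) hl6 h2
  · push_neg at hconst
    obtain ⟨⟨i0, hi0, hPi0⟩, ⟨j0, hj0, hPj0⟩⟩ := hconst
    have hchange : ∃ k, k + 1 < ℓ ∧ ¬ (P k ↔ P (k+1)) := by
      by_contra hno
      push_neg at hno
      have hsame : ∀ k < ℓ, (P k ↔ P 0) := by
        intro k hk
        induction k with
        | zero => exact Iff.rfl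
        | succ n ih =>
          exact ((hno n (by omega)).rec (fun a b => ⟨b, a⟩) : P (n+1) ↔ P n).trans
            (ih (by omega))
      have t1 := (hsame i0 hi0)
      have t2 := (hsame j0 hj0)
      tauto
    obtain ⟨k, hk, hne⟩ := hchange
    have hdk : d (k+2) = d k := by
      by_cases hPk : P k
      · have hnk1 : ¬ P (k+1) := fun h => hne ⟨fun _ => h, fun _ => hPk⟩
        have e1 : d (k+1) = d k + 1 := hPk
        have e2 : d (k+1) = d (k+2) + 1 := hexcl (k+1) (by omega) hnk1
        linear_combination e1 - e2
      · have hk1 : P (k+1) := by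
          by_contra hnk1
          exact hne (iff_of_false hPk hnk1)
        have e1 : d k = d (k+1) + 1 := hexcl k (by omega) hPk
        have e2 : d (k+2) = d (k+1) + 1 := hk1
        rw [← e1] at e2
        exact e2
    by_cases hk2 : k + 2 < ℓ
    · have := hinj (k+2) k hk2 (by omega) hdk
      omega
    · have hk2e : k + 2 = ℓ := by omega
      rw [hk2e, hclose] at hdk
      have := hinj k 0 (by omega) (by omega) hdk.symm
      omega



open SimpleGraph

variable {q : ℕ}

def rowAdj (e : F ≃ ZMod q) (p p' : F × F × F) : Prop :=
  p ≠ p' ∧ isPi p ∧ isPi p' ∧ p.2.1 = p'.2.1 ∧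
    (e p'.1 = e p.1 + 1 ∨ e p.1 = e p'.1 + 1)

lemma rowAdj_symm (e : F ≃ ZMod q) {p p' : F × F × F} (h : rowAdj e p p') :
    rowAdj e p' p :=
  ⟨Ne.symm h.1, h.2.2.1, h.2.1, h.2.2.2.1.symm, h.2.2.2.2.symm⟩

abbrev V (F : Type) [Field F] := (F × F × F) ⊕ {l : F × F × F // ¬ deleted l}

def Gr (e : F ≃ ZMod q) : SimpleGraph (V F) where
  Adj v w :=
    match v, w with
    | Sum.inl p, Sum.inl p' => rowAdj e p p'
    | Sum.inl p, Sum.inr l => incid p l.1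
    | Sum.inr l, Sum.inl p => incid p l.1
    | Sum.inr _, Sum.inr _ => False
  symm := by
    constructor
    rintro (p | l) (p' | l') h
    · exact rowAdj_symm e h
    · exact h
    · exact h
    · exact h.elim
  loopless := by
    constructor
    rintro (p | l) h
    · exact h.1 rfl
    · exact h

lemma adj_ll (e : F ≃ ZMod q) {p p' : F × F × F} :
    (Gr e).Adj (Sum.inl p) (Sum.inl p') ↔ rowAdj e p p' := Iff.rfl

lemma adj_lr (e : F ≃ ZMod q) {p : F × F × F} {l : {l : F × F × F // ¬ deleted l}} :
    (Gr e).Adj (Sum.inl p) (Sum.inr l) ↔ incid p l.1 := Iff.rfl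

lemma adj_rl (e : F ≃ ZMod q) {p : F × F × F} {l : {l : F × F × F // ¬ deleted l}} :
    (Gr e).Adj (Sum.inr l) (Sum.inl p) ↔ incid p l.1 := Iff.rfl

lemma adj_rr (e : F ≃ ZMod q) {l l' : {l : F × F × F // ¬ deleted l}} :
    ¬ (Gr e).Adj (Sum.inr l) (Sum.inr l') := fun h => h


def px : V F → F := Sum.elim (fun p => p.1) (fun _ => 0)
def py : V F → F := Sum.elim (fun p => p.2.1) (fun _ => 0)

@[simp] lemma px_inl (p : F × F × F) : px (Sum.inl p : V F) = p.1 := rfl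
@[simp] lemma py_inl (p : F × F × F) : py (Sum.inl p : V F) = p.2.1 := rfl

lemma girth_lb [DecidableEq F] {q : ℕ} (hq : 7 ≤ q) (e : F ≃ ZMod q) {u : V F}
    (w : (Gr e).Walk u u) (hw : w.IsCycle) : 7 ≤ w.length := by
  by_contra hlt
  push_neg at hlt
  have hlen : w.length ≤ 6 := by omega
  have h3 : 3 ≤ w.length := hw.three_le_length
  rcases Classical.em (∃ l : {l : F × F × F // ¬ deleted l}, (Sum.inr l : V F) ∈ w.support)
    with hline | hline
  · -- there is a line vertex on the cycle: rotate to base it there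
    obtain ⟨l0, hl0⟩ := hline
    have hw' : (w.rotate _ hl0).IsCycle := hw.rotate hl0
    have hLen : (w.rotate _ hl0).length = w.length := length_rotate' w hl0
    set w' := w.rotate _ hl0 with hw'def
    have hadj : ∀ i, i < w'.length → (Gr e).Adj (w'.getVert i) (w'.getVert (i+1)) :=
      fun i hi => w'.adj_getVert_succ hi
    have hinj : ∀ i j, i < w'.length → j < w'.length →
        w'.getVert i = w'.getVert j → i = j :=
      fun i j hi hj h => cycle_getVert_inj hw' hi hj h
    have hc0 : w'.getVert 0 = Sum.inr l0 := w'.getVert_zero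
    have hcn : w'.getVert w'.length = Sum.inr l0 := w'.getVert_length
    have hl36 : w'.length = 3 ∨ w'.length = 4 ∨ w'.length = 5 ∨ w'.length = 6 := by omega
    rcases hl36 with hL | hL | hL | hL
    · -- length 3 : L P P
      have h01 := hadj 0 (by omega)
      have h12 := hadj 1 (by omega)
      have h23 := hadj 2 (by omega)
      have hc3 : w'.getVert 3 = Sum.inr l0 := by rw [← hL]; exact hcn
      rw [hc0] at h01
      rw [hc3] at h23
      rcases he1 : w'.getVert 1 with p1 | l1
      · rw [he1] at h01 h12
        rcases he2 : w'.getVert 2 with p2 | l2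
        · rw [he2] at h12 h23
          have i1 : incid p1 l0.1 := h01
          have r12 : rowAdj e p1 p2 := h12
          have i2 : incid p2 l0.1 := h23
          exact r12.1 (no_two_pi r12.2.1 r12.2.2.1 i1 i2 l0.2)
        · rw [he2] at h23
          exact adj_rr e h23
      · rw [he1] at h01
        exact adj_rr e h01
    · -- length 4 : L P ? P
      have h01 := hadj 0 (by omega)
      have h12 := hadj 1 (by omega)
      have h23 := hadj 2 (by omega)
      have h34 := hadj 3 (by omega)
      have hc4 : w'.getVert 4 = Sum.inr l0 := by rw [← hL]; exact hcn
      rw [hc0] at h01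
      rw [hc4] at h34
      rcases he1 : w'.getVert 1 with p1 | l1
      swap
      · rw [he1] at h01; exact adj_rr e h01
      rw [he1] at h01 h12
      rcases he3 : w'.getVert 3 with p3 | l3
      swap
      · rw [he3] at h34; exact adj_rr e h34
      rw [he3] at h23 h34
      rcases he2 : w'.getVert 2 with p2 | l2
      · rw [he2] at h12 h23
        have r12 : rowAdj e p1 p2 := h12
        have r23 : rowAdj e p2 p3 := h23
        have i1 : incid p1 l0.1 := h01
        have i3 : incid p3 l0.1 := h34
        have hp13 : p1 ≠ p3 := by
          intro h
          have : (1:ℕ) = 3 := hinj 1 3 (by omega) (by omega) (by rw [he1, he3, h])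
          omega
        exact hp13 (no_two_pi r12.2.1 r23.2.2.1 i1 i3 l0.2)
      · rw [he2] at h12 h23
        have i11 : incid p1 l0.1 := h01
        have i12 : incid p1 l2.1 := h12
        have i32 : incid p3 l2.1 := h23
        have i31 : incid p3 l0.1 := h34
        have hp13 : p1 ≠ p3 := by
          intro h
          have : (1:ℕ) = 3 := hinj 1 3 (by omega) (by omega) (by rw [he1, he3, h])
          omega
        have hl02 : l0.1 ≠ l2.1 := by
          intro h
          have : (0:ℕ) = 2 := hinj 0 2 (by omega) (by omega)
            (by rw [hc0, he2]; exact congrArg Sum.inr (Subtype.ext h))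
          omega
        exact hl02 (line_unique i11 i31 i12 i32 hp13)
    · -- length 5 : L P ? ? P
      have h01 := hadj 0 (by omega)
      have h12 := hadj 1 (by omega)
      have h23 := hadj 2 (by omega)
      have h34 := hadj 3 (by omega)
      have h45 := hadj 4 (by omega)
      have hc5 : w'.getVert 5 = Sum.inr l0 := by rw [← hL]; exact hcn
      rw [hc0] at h01
      rw [hc5] at h45
      rcases he1 : w'.getVert 1 with p1 | l1
      swap
      · rw [he1] at h01; exact adj_rr e h01
      rw [he1] at h01 h12
      rcases he4 : w'.getVert 4 with p4 | l4
      swap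
      · rw [he4] at h45; exact adj_rr e h45
      rw [he4] at h34 h45
      have i1 : incid p1 l0.1 := h01
      have i4 : incid p4 l0.1 := h45
      have hp14 : p1 ≠ p4 := by
        intro h
        have : (1:ℕ) = 4 := hinj 1 4 (by omega) (by omega) (by rw [he1, he4, h])
        omega
      rcases he2 : w'.getVert 2 with p2 | l2
      · rw [he2] at h12 h23
        rcases he3 : w'.getVert 3 with p3 | l3
        · -- P P P
          rw [he3] at h23 h34
          have r12 : rowAdj e p1 p2 := h12
          have r34 : rowAdj e p3 p4 := h34
          exact hp14 (no_two_pi r12.2.1 r34.2.2.1 i1 i4 l0.2)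
        · -- P P L P : four-path p1 - l0 - p4 - l3 - p2 with p1 ~row~ p2
          rw [he3] at h23 h34
          have r12 : rowAdj e p1 p2 := h12
          have i23 : incid p2 l3.1 := h23
          have i43 : incid p4 l3.1 := h34
          have hl03 : l0.1 ≠ l3.1 := by
            intro h
            have : (0:ℕ) = 3 := hinj 0 3 (by omega) (by omega)
              (by rw [hc0, he3]; exact congrArg Sum.inr (Subtype.ext h))
            omega
          have hp41 : p4 ≠ p1 := Ne.symm hp14
          have hp42 : p4 ≠ p2 := by
            intro h
            have : (4:ℕ) = 2 := hinj 4 2 (by omega) (by omega) (by rw [he4, he2, h])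
            omega
          exact no_four_path r12.2.1 r12.2.2.1 r12.2.2.2.1 r12.1 hl03 l0.2 l3.2
            i1 i4 i43 i23 hp41 hp42
      · -- P L P P
        rw [he2] at h12 h23
        rcases he3 : w'.getVert 3 with p3 | l3
        swap
        · rw [he3] at h23; exact adj_rr e h23
        rw [he3] at h23 h34
        have i12 : incid p1 l2.1 := h12
        have i32 : incid p3 l2.1 := h23
        have r34 : rowAdj e p3 p4 := h34
        have hl02 : l0.1 ≠ l2.1 := by
          intro h
          have : (0:ℕ) = 2 := hinj 0 2 (by omega) (by omega)
            (by rw [hc0, he2]; exact congrArg Sum.inr (Subtype.ext h))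
          omega
        have hp13' : p1 ≠ p4 := hp14
        have hp1p3 : p1 ≠ p3 := by
          intro h
          have : (1:ℕ) = 3 := hinj 1 3 (by omega) (by omega) (by rw [he1, he3, h])
          omega
        -- four path p4 - l0 - p1 - l2 - p3, p4 ~row~ p3
        exact no_four_path r34.2.2.1 r34.2.1 r34.2.2.2.1.symm (Ne.symm r34.1) hl02 l0.2 l2.2
          i4 i1 i12 i32 hp14 hp1p3
    · -- length 6 : L P ? ? ? P
      have h01 := hadj 0 (by omega)
      have h12 := hadj 1 (by omega)
      have h23 := hadj 2 (by omega)
      have h34 := hadj 3 (by omega)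
      have h45 := hadj 4 (by omega)
      have h56 := hadj 5 (by omega)
      have hc6 : w'.getVert 6 = Sum.inr l0 := by rw [← hL]; exact hcn
      rw [hc0] at h01
      rw [hc6] at h56
      rcases he1 : w'.getVert 1 with p1 | l1
      swap
      · rw [he1] at h01; exact adj_rr e h01
      rw [he1] at h01 h12
      rcases he5 : w'.getVert 5 with p5 | l5
      swap
      · rw [he5] at h56; exact adj_rr e h56
      rw [he5] at h45 h56
      have i1 : incid p1 l0.1 := h01
      have i5 : incid p5 l0.1 := h56
      have hp15 : p1 ≠ p5 := by
        intro h
        have : (1:ℕ) = 5 := hinj 1 5 (by omega) (by omega) (by rw [he1, he5, h])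
        omega
      rcases he2 : w'.getVert 2 with p2 | l2
      · rw [he2] at h12 h23
        have r12 : rowAdj e p1 p2 := h12
        rcases he3 : w'.getVert 3 with p3 | l3
        · rw [he3] at h23 h34
          have r23 : rowAdj e p2 p3 := h23
          rcases he4 : w'.getVert 4 with p4 | l4
          · -- P P P P P
            rw [he4] at h34 h45
            have r45 : rowAdj e p4 p5 := h45
            exact hp15 (no_two_pi r12.2.1 r45.2.2.1 i1 i5 l0.2)
          · -- P P P L P : four path p1 - l0 - p5 - l4 - p3, p1 row p3
            rw [he4] at h34 h45
            have i34 : incid p3 l4.1 := h34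
            have i54 : incid p5 l4.1 := h45
            have hl04 : l0.1 ≠ l4.1 := by
              intro h
              have : (0:ℕ) = 4 := hinj 0 4 (by omega) (by omega)
                (by rw [hc0, he4]; exact congrArg Sum.inr (Subtype.ext h))
              omega
            have hp13 : p1 ≠ p3 := by
              intro h
              have : (1:ℕ) = 3 := hinj 1 3 (by omega) (by omega) (by rw [he1, he3, h])
              omega
            have hp53 : p5 ≠ p3 := by
              intro h
              have : (5:ℕ) = 3 := hinj 5 3 (by omega) (by omega) (by rw [he5, he3, h])
              omega
            have hy13 : p1.2.1 = p3.2.1 := r12.2.2.2.1.trans r23.2.2.2.1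
            exact no_four_path r12.2.1 r23.2.2.1 hy13 hp13 hl04 l0.2 l4.2
              i1 i5 i54 i34 hp15.symm hp53
        · -- P P L ? P
          rw [he3] at h23 h34
          have i23 : incid p2 l3.1 := h23
          rcases he4 : w'.getVert 4 with p4 | l4
          · -- P P L P P : p1, p5 both pi on l0
            rw [he4] at h34 h45
            have r45 : rowAdj e p4 p5 := h45
            exact hp15 (no_two_pi r12.2.1 r45.2.2.1 i1 i5 l0.2)
          · rw [he4] at h34
            exact adj_rr e h34
      · -- L P L ? ? P with c2 a line
        rw [he2] at h12 h23
        have i12 : incid p1 l2.1 := h12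
        rcases he3 : w'.getVert 3 with p3 | l3
        swap
        · rw [he3] at h23; exact adj_rr e h23
        rw [he3] at h23 h34
        have i32 : incid p3 l2.1 := h23
        rcases he4 : w'.getVert 4 with p4 | l4
        · -- L P L P P P? : c4 point, c5 point
          rw [he4] at h34 h45
          have r34 : rowAdj e p3 p4 := h34
          have r45 : rowAdj e p4 p5 := h45
          have hl02 : l0.1 ≠ l2.1 := by
            intro h
            have : (0:ℕ) = 2 := hinj 0 2 (by omega) (by omega)
              (by rw [hc0, he2]; exact congrArg Sum.inr (Subtype.ext h))
            omega
          have hp53 : p5 ≠ p3 := by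
            intro h
            have : (5:ℕ) = 3 := hinj 5 3 (by omega) (by omega) (by rw [he5, he3, h])
            omega
          have hp13 : p1 ≠ p3 := by
            intro h
            have : (1:ℕ) = 3 := hinj 1 3 (by omega) (by omega) (by rw [he1, he3, h])
            omega
          have hy53 : p5.2.1 = p3.2.1 := (r45.2.2.2.1.symm).trans (r34.2.2.2.1.symm)
          -- four path p5 - l0 - p1 - l2 - p3 with p5 row p3
          exact no_four_path r45.2.2.1 r34.2.1 hy53 hp53 hl02 l0.2 l2.2
            i5 i1 i12 i32 hp15 hp13
        · -- L P L P L P : triangle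
          rw [he4] at h34 h45
          have i34 : incid p3 l4.1 := h34
          have i54 : incid p5 l4.1 := h45
          have hp13 : p1 ≠ p3 := by
            intro h
            have : (1:ℕ) = 3 := hinj 1 3 (by omega) (by omega) (by rw [he1, he3, h])
            omega
          have hp35 : p3 ≠ p5 := by
            intro h
            have : (3:ℕ) = 5 := hinj 3 5 (by omega) (by omega) (by rw [he3, he5, h])
            omega
          have hl24 : l2.1 ≠ l4.1 := by
            intro h
            have : (2:ℕ) = 4 := hinj 2 4 (by omega) (by omega)
              (by rw [he2, he4]; exact congrArg Sum.inr (Subtype.ext h))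
            omega
          have hl40 : l4.1 ≠ l0.1 := by
            intro h
            have : (4:ℕ) = 0 := hinj 4 0 (by omega) (by omega)
              (by rw [he4, hc0]; exact congrArg Sum.inr (Subtype.ext h))
            omega
          have hl20 : l2.1 ≠ l0.1 := by
            intro h
            have : (2:ℕ) = 0 := hinj 2 0 (by omega) (by omega)
              (by rw [he2, hc0]; exact congrArg Sum.inr (Subtype.ext h))
            omega
          exact no_triangle i12 i32 i34 i54 i5 i1 hp13 hp35 hp15 hl24 hl40 hl20
  · -- no line vertex: the cycle lives in the new point-cycles
    push_neg at hline
    have hpt : ∀ i, i ≤ w.length → ∃ p, w.getVert i = Sum.inl p := by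
      intro i hi
      rcases hv : w.getVert i with p | l
      · exact ⟨p, rfl⟩
      · exact absurd (hv ▸ Walk.mem_support_iff_exists_getVert.mpr ⟨i, rfl, hi⟩) (hline l)
    have hrow : ∀ i, i < w.length → ∃ p p', w.getVert i = Sum.inl p ∧
        w.getVert (i+1) = Sum.inl p' ∧ rowAdj e p p' := by
      intro i hi
      obtain ⟨p, hp⟩ := hpt i (le_of_lt hi)
      obtain ⟨p', hp'⟩ := hpt (i+1) hi
      have hadj := w.adj_getVert_succ hi
      rw [hp, hp'] at hadj
      exact ⟨p, p', hp, hp', hadj⟩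
    have hy : ∀ i, i ≤ w.length → py (w.getVert i) = py (w.getVert 0) := by
      intro i
      induction i with
      | zero => intro _; rfl
      | succ m ih =>
        intro hm
        obtain ⟨p, p', hp, hp', hr⟩ := hrow m (by omega)
        rw [hp', py_inl, ← hr.2.2.2.1, ← py_inl (F := F) p, ← hp]
        exact ih (by omega)
    apply zmod_no_short_cycle hq h3 hlen (fun i => e (px (w.getVert i)))
    · intro i hi
      obtain ⟨p, p', hp, hp', hr⟩ := hrow i hi
      rw [hp, hp', px_inl, px_inl]
      exact hr.2.2.2.2
    · rw [Walk.getVert_length, Walk.getVert_zero]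
    · intro i j hi hj hd
      obtain ⟨pi, pi', hpi, hpi', hri⟩ := hrow i hi
      obtain ⟨pj, pj', hpj, hpj', hrj⟩ := hrow j hj
      rw [hpi, hpj, px_inl, px_inl] at hd
      have hx : pi.1 = pj.1 := e.injective hd
      have hyy : pi.2.1 = pj.2.1 := by
        have t1 := hy i (le_of_lt hi)
        have t2 := hy j (le_of_lt hj)
        rw [hpi, py_inl] at t1
        rw [hpj, py_inl] at t2
        rw [t1, t2]
      have hz : pi.2.2 = pj.2.2 := by
        rw [hri.2.1, hrj.2.1, hyy]
      have hpp : pi = pj := by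
        ext
        · exact hx
        · exact hyy
        · exact hz
      exact cycle_getVert_inj hw hi hj (by rw [hpi, hpj, hpp])

lemma exists_tuv [Fintype F] [DecidableEq F] (hcard : 7 ≤ Fintype.card F) :
    ∃ t u v : F, t ≠ 0 ∧ t ≠ 1 ∧ u ≠ 0 ∧ u ≠ 1 ∧ v ≠ 0 ∧ v ≠ 1 ∧
      t ≠ u ∧ t ≠ v ∧ u ≠ v := by
  classical
  set s : Finset F := Finset.univ \ {0, 1} with hs
  have hcard2 : ({0, 1} : Finset F).card ≤ 2 := by
    apply le_trans (Finset.card_insert_le _ _)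
    simp
  have hcs : 5 ≤ s.card := by
    rw [hs, Finset.card_sdiff_of_subset (Finset.subset_univ _), Finset.card_univ]
    omega
  obtain ⟨t, ht⟩ := Finset.card_pos.mp (show 0 < s.card by omega)
  have hcs2 : 1 ≤ (s.erase t).card := by
    have := Finset.card_erase_of_mem ht
    omega
  obtain ⟨u, hu⟩ := Finset.card_pos.mp (show 0 < (s.erase t).card by omega)
  have hus : u ∈ s := Finset.mem_of_mem_erase hu
  have hcs3 : 1 ≤ ((s.erase t).erase u).card := by
    have h1 := Finset.card_erase_of_mem ht
    have h2 := Finset.card_erase_of_mem hu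
    omega
  obtain ⟨v, hv⟩ := Finset.card_pos.mp (show 0 < ((s.erase t).erase u).card by omega)
  have hvs : v ∈ s := Finset.mem_of_mem_erase (Finset.mem_of_mem_erase hv)
  have hmem : ∀ x : F, x ∈ s → x ≠ 0 ∧ x ≠ 1 := by
    intro x hx
    rw [hs, Finset.mem_sdiff] at hx
    simp only [Finset.mem_insert, Finset.mem_singleton] at hx
    exact ⟨fun h => hx.2 (Or.inl h), fun h => hx.2 (Or.inr h)⟩
  obtain ⟨ht0, ht1⟩ := hmem t ht
  obtain ⟨hu0, hu1⟩ := hmem u hus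
  obtain ⟨hv0, hv1⟩ := hmem v hvs
  refine ⟨t, u, v, ht0, ht1, hu0, hu1, hv0, hv1, ?_, ?_, ?_⟩
  · exact fun h => (Finset.mem_erase.mp hu).1 h.symm
  · exact fun h => (Finset.mem_erase.mp (Finset.mem_of_mem_erase hv)).1 h.symm
  · exact fun h => (Finset.mem_erase.mp hv).1 h.symm

lemma seven_cycle [Fintype F] [DecidableEq F] {q : ℕ} (hq : 7 ≤ q)
    (hcard : Fintype.card F = q) (e : F ≃ ZMod q) :
    ∃ (z : V F) (w : (Gr e).Walk z z), w.IsCycle ∧ w.length = 7 := by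
  obtain ⟨t, u, v, ht0, ht1, hu0, hu1, hv0, hv1, htu, htv, huv⟩ :=
    exists_tuv (F := F) (by omega)
  haveI : NeZero q := ⟨by omega⟩
  set x0 : F := e.symm 0 with hx0
  set x1 : F := e.symm 1 with hx1
  have h10 : (1 : ZMod q) ≠ 0 := by
    intro h
    have : ((1:ℕ) : ZMod q) = 0 := by exact_mod_cast h
    have := (ZMod.natCast_eq_zero_iff 1 q).mp this
    have := Nat.le_of_dvd (by omega) this
    omega
  have hx01 : x1 ≠ x0 := by
    intro h
    exact h10 (e.symm.injective (by rw [← hx1, ← hx0, h]))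
  have hD : x1 - x0 ≠ 0 := sub_ne_zero.mpr hx01
  set D : F := x1 - x0 with hDdef
  have hut : u - t ≠ 0 := sub_ne_zero.mpr (Ne.symm htu)
  have hvt : v - t ≠ 0 := sub_ne_zero.mpr (Ne.symm htv)
  have hvu : v - u ≠ 0 := sub_ne_zero.mpr (Ne.symm huv)
  set a : F := D * u * v / ((u - t) * (v - t)) with ha_def
  set b : F := -(D * t * v) / ((u - t) * (v - u)) with hb_def
  set c : F := D * t * u / ((v - t) * (v - u)) with hc_def
  have ha : a ≠ 0 := by
    rw [ha_def]
    exact div_ne_zero (mul_ne_zero (mul_ne_zero hD hu0) hv0) (mul_ne_zero hut hvt)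
  have hb : b ≠ 0 := by
    rw [hb_def]
    exact div_ne_zero (neg_ne_zero.mpr (mul_ne_zero (mul_ne_zero hD ht0) hv0))
      (mul_ne_zero hut hvu)
  have hc : c ≠ 0 := by
    rw [hc_def]
    exact div_ne_zero (mul_ne_zero (mul_ne_zero hD ht0) hu0) (mul_ne_zero hvt hvu)
  have eq1 : a + b + c = x1 - x0 := by
    rw [ha_def, hb_def, hc_def, hDdef]
    field_simp
    ring
  have eq2 : a * t + b * u + c * v = 0 := by
    rw [ha_def, hb_def, hc_def]
    field_simp
    ring
  have eq3 : a * t * t + b * u * u + c * v * v = 0 := by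
    rw [ha_def, hb_def, hc_def]
    field_simp
    ring
  -- the seven vertices
  set p0 : F × F × F := (x0, 0, 0) with hp0
  set p1 : F × F × F := (x1, 0, 0) with hp1
  set r : F × F × F := (x0 + a, a * t, a * t * t) with hr
  set r' : F × F × F := (x0 + a + b, a * t + b * u, a * t * t + b * u * u) with hr'
  have hl1d : ¬ deleted (t, -(t * x0), -(t * t * x0)) := by
    rintro ⟨h | h, -⟩
    · exact ht0 h
    · exact ht1 h
  have hl2d : ¬ deleted (u, a * t - u * (x0 + a), a * t * t - u * u * (x0 + a)) := by
    rintro ⟨h | h, -⟩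
    · exact hu0 h
    · exact hu1 h
  have hl3d : ¬ deleted (v, -(v * x1), -(v * v * x1)) := by
    rintro ⟨h | h, -⟩
    · exact hv0 h
    · exact hv1 h
  set l1 : {l : F × F × F // ¬ deleted l} := ⟨(t, -(t * x0), -(t * t * x0)), hl1d⟩ with hl1
  set l2 : {l : F × F × F // ¬ deleted l} :=
    ⟨(u, a * t - u * (x0 + a), a * t * t - u * u * (x0 + a)), hl2d⟩ with hl2
  set l3 : {l : F × F × F // ¬ deleted l} := ⟨(v, -(v * x1), -(v * v * x1)), hl3d⟩ with hl3
  -- incidences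
  have i_p0_l1 : incid p0 l1.1 := ⟨by rw [hp0, hl1]; ring, by rw [hp0, hl1]; ring⟩
  have i_r_l1 : incid r l1.1 := ⟨by rw [hr, hl1]; ring, by rw [hr, hl1]; ring⟩
  have i_r_l2 : incid r l2.1 := ⟨by rw [hr, hl2]; ring, by rw [hr, hl2]; ring⟩
  have i_r'_l2 : incid r' l2.1 := ⟨by rw [hr', hl2]; ring, by rw [hr', hl2]; ring⟩
  have i_r'_l3 : incid r' l3.1 := by
    constructor
    · show a * t + b * u = v * (x0 + a + b) + -(v * x1)
      linear_combination eq2 - v * eq1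
    · show a * t * t + b * u * u = v * v * (x0 + a + b) + -(v * v * x1)
      linear_combination eq3 - v * v * eq1
  have i_p1_l3 : incid p1 l3.1 := ⟨by rw [hp1, hl3]; ring, by rw [hp1, hl3]; ring⟩
  have row01 : rowAdj e p1 p0 := by
    refine ⟨?_, rfl, rfl, rfl, Or.inr ?_⟩
    · intro h
      exact hx01 (congrArg Prod.fst h)
    · show e x1 = e x0 + 1
      rw [hx0, hx1]
      simp
  -- adjacency of the walk steps
  have hA1 : (Gr e).Adj (Sum.inl p0) (Sum.inr l1) := i_p0_l1
  have hA2 : (Gr e).Adj (Sum.inr l1) (Sum.inl r) := i_r_l1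
  have hA3 : (Gr e).Adj (Sum.inl r) (Sum.inr l2) := i_r_l2
  have hA4 : (Gr e).Adj (Sum.inr l2) (Sum.inl r') := i_r'_l2
  have hA5 : (Gr e).Adj (Sum.inl r') (Sum.inr l3) := i_r'_l3
  have hA6 : (Gr e).Adj (Sum.inr l3) (Sum.inl p1) := i_p1_l3
  have hA7 : (Gr e).Adj (Sum.inl p1) (Sum.inl p0) := row01
  -- distinctness facts
  have hry : a * t ≠ 0 := mul_ne_zero ha ht0
  have hr'y : a * t + b * u ≠ 0 := by
    intro h
    have : c * v = 0 := by linear_combination eq2 - h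
    exact (mul_ne_zero hc hv0) this
  have hne_r_p0 : r ≠ p0 := by
    intro h
    exact hry (by rw [show a * t = r.2.1 from rfl, h])
  have hne_r_p1 : r ≠ p1 := by
    intro h
    exact hry (by rw [show a * t = r.2.1 from rfl, h])
  have hne_r'_p0 : r' ≠ p0 := by
    intro h
    exact hr'y (by rw [show a * t + b * u = r'.2.1 from rfl, h])
  have hne_r'_p1 : r' ≠ p1 := by
    intro h
    exact hr'y (by rw [show a * t + b * u = r'.2.1 from rfl, h])
  have hne_r_r' : r ≠ r' := by
    intro h
    have : x0 + a = x0 + a + b := congrArg Prod.fst h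
    have : b = 0 := by linear_combination -this
    exact hb this
  have hne_p0_p1 : p0 ≠ p1 := by
    intro h
    exact hx01 (congrArg Prod.fst h).symm
  have hne_l1_l2 : l1 ≠ l2 := by
    intro h
    exact htu (congrArg (fun x => x.1.1) h)
  have hne_l1_l3 : l1 ≠ l3 := by
    intro h
    exact htv (congrArg (fun x => x.1.1) h)
  have hne_l2_l3 : l2 ≠ l3 := by
    intro h
    exact huv (congrArg (fun x => x.1.1) h)
  -- the walk
  refine ⟨Sum.inl p0,
    Walk.cons hA1 (Walk.cons hA2 (Walk.cons hA3 (Walk.cons hA4 (Walk.cons hA5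
      (Walk.cons hA6 (Walk.cons hA7 Walk.nil)))))), ?_, rfl⟩
  rw [Walk.isCycle_def]
  refine ⟨?_, by simp, ?_⟩
  · rw [Walk.isTrail_def]
    simp only [Walk.edges_cons, Walk.edges_nil, List.nodup_cons, List.mem_cons,
      List.mem_singleton, List.not_mem_nil, or_false, List.nodup_nil, and_true,
      Sym2.eq, Sym2.rel_iff', Prod.mk.injEq, Prod.swap_prod_mk]
    simp [hne_p0_p1, hne_p0_p1.symm, hne_r_p0, hne_r_p0.symm, hne_r_p1, hne_r_p1.symm, hne_r'_p0, hne_r'_p0.symm, hne_r'_p1, hne_r'_p1.symm, hne_r_r', hne_r_r'.symm, hne_l1_l2, hne_l1_l2.symm, hne_l1_l3, hne_l1_l3.symm, hne_l2_l3, hne_l2_l3.symm]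
  · simp only [Walk.support_cons, Walk.support_nil, List.tail_cons]
    simp [hne_p0_p1, hne_p0_p1.symm, hne_r_p0, hne_r_p0.symm, hne_r_p1, hne_r_p1.symm, hne_r'_p0, hne_r'_p0.symm, hne_r'_p1, hne_r'_p1.symm, hne_r_r', hne_r_r'.symm, hne_l1_l2, hne_l1_l2.symm, hne_l1_l3, hne_l1_l3.symm, hne_l2_l3, hne_l2_l3.symm]

instance instDecDeleted [DecidableEq F] : DecidablePred (fun l : F × F × F => deleted l) :=
  fun _ => decidable_of_iff ((_ = 0 ∨ _ = 1) ∧ _ = _) Iff.rfl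

lemma nbr_line [Fintype F] [DecidableEq F] {q : ℕ} (e : F ≃ ZMod q)
    (l : {l : F × F × F // ¬ deleted l}) :
    Nat.card ((Gr e).neighborSet (Sum.inr l)) = Fintype.card F := by
  have hbij : Function.Bijective (fun x : F =>
      (⟨Sum.inl (x, l.1.1 * x + l.1.2.1, l.1.1 * l.1.1 * x + l.1.2.2),
        (⟨rfl, rfl⟩ : incid (x, l.1.1 * x + l.1.2.1, l.1.1 * l.1.1 * x + l.1.2.2) l.1)⟩ :
        (Gr e).neighborSet (Sum.inr l))) := by
    constructor
    · intro x x' h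
      have := congrArg (fun z => px z.1) h
      simpa using this
    · rintro ⟨w, hw⟩
      rcases w with p | l'
      · have hin : incid p l.1 := hw
        refine ⟨p.1, ?_⟩
        apply Subtype.ext
        simp only
        congr 1
        have h1 : l.1.1 * p.1 + l.1.2.1 = p.2.1 := hin.1.symm
        have h2 : l.1.1 * l.1.1 * p.1 + l.1.2.2 = p.2.2 := hin.2.symm
        rw [h1, h2]
      · exact ((hw : False)).elim
  rw [← Nat.card_eq_fintype_card]
  exact (Nat.card_eq_of_bijective _ hbij).symm

lemma nbr_pt_nonpi [Fintype F] [DecidableEq F] {q : ℕ} (e : F ≃ ZMod q)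
    (p : F × F × F) (hp : ¬ isPi p) :
    Nat.card ((Gr e).neighborSet (Sum.inl p)) = Fintype.card F := by
  have hnd : ∀ t : F, ¬ deleted (t, p.2.1 - t * p.1, p.2.2 - t * t * p.1) := by
    rintro t ⟨ht | ht, heq⟩ <;> subst ht <;> apply hp <;>
      (show p.2.2 = p.2.1; linear_combination heq)
  have hbij : Function.Bijective (fun t : F =>
      (⟨Sum.inr ⟨(t, p.2.1 - t * p.1, p.2.2 - t * t * p.1), hnd t⟩,
        (⟨by ring, by ring⟩ : incid p (t, p.2.1 - t * p.1, p.2.2 - t * t * p.1))⟩ :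
        (Gr e).neighborSet (Sum.inl p))) := by
    constructor
    · intro x x' h
      have := congrArg (fun z => Sum.elim (fun _ => (0:F)) (fun l => l.1.1) z.1) h
      simpa using this
    · rintro ⟨w, hw⟩
      rcases w with p' | ⟨⟨lt, lb, lc⟩, hl⟩
      · have : rowAdj e p p' := hw
        exact absurd this.2.1 hp
      · have hin : incid p (lt, lb, lc) := hw
        refine ⟨lt, ?_⟩
        apply Subtype.ext
        simp only
        congr 1
        apply Subtype.ext
        simp only [Prod.mk.injEq]
        refine ⟨by trivial, by linear_combination hin.1, by linear_combination hin.2⟩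
  rw [← Nat.card_eq_fintype_card]
  exact (Nat.card_eq_of_bijective _ hbij).symm

lemma card_ne01 [Fintype F] [DecidableEq F] :
    Fintype.card {t : F // t ≠ 0 ∧ t ≠ 1} = Fintype.card F - 2 := by
  rw [Fintype.card_subtype]
  have h1 : Finset.filter (fun t : F => t ≠ 0 ∧ t ≠ 1) Finset.univ
      = Finset.univ \ {0, 1} := by
    ext x
    simp [Finset.mem_sdiff, not_or]
  rw [h1, Finset.card_sdiff_of_subset (Finset.subset_univ _), Finset.card_univ]
  have h2 : ({0, 1} : Finset F).card = 2 := by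
    rw [Finset.card_insert_of_notMem (by simp), Finset.card_singleton]
  rw [h2]

lemma nbr_pt_pi [Fintype F] [DecidableEq F] {q : ℕ} (hq : 7 ≤ q) (e : F ≃ ZMod q)
    (p : F × F × F) (hp : isPi p) :
    Nat.card ((Gr e).neighborSet (Sum.inl p)) = (Fintype.card F - 2) + 2 := by
  haveI : NeZero q := ⟨by omega⟩
  have h10 : (1 : ZMod q) ≠ 0 := by
    intro h
    have : ((1:ℕ) : ZMod q) = 0 := by exact_mod_cast h
    have := (ZMod.natCast_eq_zero_iff 1 q).mp this
    have := Nat.le_of_dvd (by omega) this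
    omega
  have h20 : (2 : ZMod q) ≠ 0 := by
    intro h
    have : ((2:ℕ) : ZMod q) = 0 := by exact_mod_cast h
    have := (ZMod.natCast_eq_zero_iff 2 q).mp this
    have := Nat.le_of_dvd (by omega) this
    omega
  have hnd : ∀ t : {t : F // t ≠ 0 ∧ t ≠ 1},
      ¬ deleted (t.1, p.2.1 - t.1 * p.1, p.2.2 - t.1 * t.1 * p.1) := by
    rintro t ⟨ht | ht, heq⟩
    · exact t.2.1 ht
    · exact t.2.2 ht
  have hrow : ∀ s : Bool, rowAdj e p
      (e.symm (e p.1 + if s then 1 else -1), p.2.1, p.2.1) := by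
    intro s
    refine ⟨?_, hp, rfl, rfl, ?_⟩
    · intro h
      have hx : p.1 = e.symm (e p.1 + if s then 1 else -1) := congrArg Prod.fst h
      have h2 : (if s then 1 else -1 : ZMod q) = 0 := by
        have h3 := congrArg e hx
        rw [Equiv.apply_symm_apply] at h3
        linear_combination -h3
      cases s
      · simp only [Bool.false_eq_true, if_false] at h2
        exact h10 (by linear_combination -h2)
      · simp only [if_true] at h2
        exact h10 h2
    · cases s
      · refine Or.inr ?_
        simp only [Bool.false_eq_true, if_false, Equiv.apply_symm_apply]
        ring
      · refine Or.inl ?_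
        simp only [if_true, Equiv.apply_symm_apply]
  have hbij : Function.Bijective
      (fun z : {t : F // t ≠ 0 ∧ t ≠ 1} ⊕ Bool =>
        (match z with
        | Sum.inl t => ⟨Sum.inr ⟨(t.1, p.2.1 - t.1 * p.1, p.2.2 - t.1 * t.1 * p.1), hnd t⟩,
            (⟨by ring, by ring⟩ :
              incid p (t.1, p.2.1 - t.1 * p.1, p.2.2 - t.1 * t.1 * p.1))⟩
        | Sum.inr s => ⟨Sum.inl (e.symm (e p.1 + if s then 1 else -1), p.2.1, p.2.1),
            hrow s⟩ : (Gr e).neighborSet (Sum.inl p))) := by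
    constructor
    · rintro (t | s) (t' | s') h
      · have := congrArg (fun z => Sum.elim (fun _ => (0:F)) (fun l => l.1.1) z.1) h
        simp only [Sum.elim_inr] at this
        exact congrArg Sum.inl (Subtype.ext this)
      · exact absurd (congrArg (fun z => z.1) h) (by simp)
      · exact absurd (congrArg (fun z => z.1) h) (by simp)
      · have hx : e.symm (e p.1 + if s then 1 else -1)
            = e.symm (e p.1 + if s' then 1 else -1) := by
          have := congrArg (fun z => px z.1) h
          simpa using this
        have h3 : (if s then 1 else -1 : ZMod q) = (if s' then 1 else -1) :=
          add_left_cancel (e.symm.injective hx)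
        cases s <;> cases s'
        · rfl
        · exfalso
          simp only [Bool.false_eq_true, if_false, if_true] at h3
          exact h20 (by linear_combination -h3)
        · exfalso
          simp only [Bool.false_eq_true, if_false, if_true] at h3
          exact h20 (by linear_combination h3)
        · rfl
    · rintro ⟨w, hw⟩
      rcases w with ⟨pa, pb, pc⟩ | ⟨⟨lt, lb, lc⟩, hl⟩
      · have hr : rowAdj e p (pa, pb, pc) := hw
        have hyy : pb = p.2.1 := hr.2.2.2.1.symm
        have hzz : pc = p.2.1 := hr.2.2.1.trans hyy
        rcases hr.2.2.2.2 with hstep | hstep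
        · refine ⟨Sum.inr true, ?_⟩
          apply Subtype.ext
          simp only [if_true]
          have hxx : e.symm (e p.1 + 1) = pa := by rw [← hstep]; simp
          rw [hxx, hyy, hzz]
        · refine ⟨Sum.inr false, ?_⟩
          apply Subtype.ext
          simp only [Bool.false_eq_true, if_false]
          have hstep' : e pa = e p.1 + -1 := by linear_combination -hstep
          have hxx : e.symm (e p.1 + -1) = pa := by rw [← hstep']; simp
          rw [hxx, hyy, hzz]
      · have hin : incid p (lt, lb, lc) := hw
        have hsl := pi_slope hp hin hl
        refine ⟨Sum.inl ⟨lt, hsl⟩, ?_⟩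
        apply Subtype.ext
        simp only
        congr 1
        apply Subtype.ext
        simp only [Prod.mk.injEq]
        refine ⟨by trivial, by linear_combination hin.1, by linear_combination hin.2⟩
  have hcong := Nat.card_eq_of_bijective _ hbij
  rw [← hcong, Nat.card_sum, Nat.card_eq_fintype_card, Nat.card_eq_fintype_card,
    card_ne01, Fintype.card_bool]

lemma card_deleted [Fintype F] [DecidableEq F] :
    Fintype.card {l : F × F × F // deleted l} = 2 * Fintype.card F := by
  have hbij : Function.Bijective (fun z : Bool × F =>
      (⟨((if z.1 then 1 else 0 : F), z.2, z.2), by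
        refine ⟨?_, rfl⟩
        cases z.1
        · exact Or.inl (by simp)
        · exact Or.inr (by simp)⟩ : {l : F × F × F // deleted l})) := by
    constructor
    · rintro ⟨s, b⟩ ⟨s', b'⟩ h
      have h1 : (if s then 1 else 0 : F) = (if s' then 1 else 0) :=
        congrArg (fun z => z.1.1) h
      have h2 : b = b' := congrArg (fun z => z.1.2.1) h
      cases s <;> cases s'
      · exact congrArg (fun x => (false, x)) h2
      · exfalso
        simp only [Bool.false_eq_true, if_false, if_true] at h1
        exact zero_ne_one h1
      · exfalso
        simp only [Bool.false_eq_true, if_false, if_true] at h1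
        exact one_ne_zero h1
      · exact congrArg (fun x => (true, x)) h2
    · rintro ⟨⟨lt, lb, lc⟩, hor, heq⟩
      simp only at heq
      rcases hor with h | h
      · refine ⟨(false, lb), Subtype.ext ?_⟩
        simp [h.symm, heq]
      · refine ⟨(true, lb), Subtype.ext ?_⟩
        simp [h.symm, heq]
  have := Nat.card_eq_of_bijective _ hbij
  rw [Nat.card_eq_fintype_card, Nat.card_eq_fintype_card] at this
  rw [← this]
  simp [Fintype.card_prod]

lemma card_V [Fintype F] [DecidableEq F] (h7 : 7 ≤ Fintype.card F) :
    Fintype.card (V F) = 2 * Fintype.card F ^ 3 - 2 * Fintype.card F := by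
  set n := Fintype.card F with hn
  have h1 : Fintype.card (F × F × F) = n ^ 3 := by
    simp [Fintype.card_prod]
    ring
  have h2 : Fintype.card {l : F × F × F // ¬ deleted l} = n ^ 3 - 2 * n := by
    have := Fintype.card_subtype_compl (fun l : F × F × F => deleted l)
    rw [this, card_deleted, h1]
  have h3 : Fintype.card (V F) = n ^ 3 + (n ^ 3 - 2 * n) := by
    rw [Fintype.card_sum, h1, h2]
  rw [h3]
  have h4 : 2 * n ≤ n ^ 3 := by
    have h5 : n ^ 3 = n * n * n := by ring
    nlinarith
  omega

lemma egirth_le_iso {α β : Type*} {G : SimpleGraph α} {G' : SimpleGraph β}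
    (f : G ≃g G') : G'.egirth ≤ G.egirth := by
  rw [le_egirth]
  intro a w hw
  have hmap : (w.map f.toHom).IsCycle :=
    (Walk.map_isCycle_iff_of_injective f.injective).mpr hw
  have h1 : G'.egirth ≤ ((w.map f.toHom).length : ℕ∞) := by
    rw [SimpleGraph.egirth]
    exact iInf_le_of_le (f a) (iInf_le_of_le (w.map f.toHom) (iInf_le _ hmap))
  rwa [Walk.length_map] at h1

lemma girth_iso {α β : Type*} {G : SimpleGraph α} {G' : SimpleGraph β}
    (f : G ≃g G') : G.girth = G'.girth := by
  unfold SimpleGraph.girth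
  rw [le_antisymm (egirth_le_iso f.symm) (egirth_le_iso f)]

lemma girth_Gr [Fintype F] [DecidableEq F] {q : ℕ} (hq : 7 ≤ q)
    (hcard : Fintype.card F = q) (e : F ≃ ZMod q) : (Gr e).girth = 7 := by
  obtain ⟨z, w, hw, hwl⟩ := seven_cycle hq hcard e
  have hub : (Gr e).egirth ≤ 7 := by
    have h1 : (Gr e).egirth ≤ (w.length : ℕ∞) := by
      rw [SimpleGraph.egirth]
      exact iInf_le_of_le z (iInf_le_of_le w (iInf_le _ hw))
    rw [hwl] at h1
    exact_mod_cast h1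
  have hlb : (7 : ℕ∞) ≤ (Gr e).egirth := by
    rw [le_egirth]
    intro a w' hw'
    exact_mod_cast Nat.cast_le.mpr (girth_lb hq e w' hw')
  have : (Gr e).egirth = 7 := le_antisymm hub hlb
  rw [SimpleGraph.girth, this]
  rfl

lemma main {q : ℕ} (hq7 : 7 ≤ q) (F : Type) [Field F] [Fintype F] [DecidableEq F]
    (hcard : Fintype.card F = q) :
    ∃ G : SimpleGraph (Fin (2 * q ^ 3 - 2 * q)),
      (∀ v, Nat.card (G.neighborSet v) = q) ∧ G.girth = 7 := by
  haveI : NeZero q := ⟨by omega⟩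
  have ecard : Fintype.card F = Fintype.card (ZMod q) := by rw [hcard, ZMod.card]
  let e : F ≃ ZMod q := Fintype.equivOfCardEq ecard
  have hv : Fintype.card (V F) = 2 * q ^ 3 - 2 * q := by
    rw [card_V (by omega), hcard]
  refine ⟨(Gr e).overFin hv, ?_, ?_⟩
  · intro v
    have hcongr := Nat.card_congr
      (Iso.mapNeighborSet ((Gr e).overFinIso hv) (((Gr e).overFinIso hv).symm v))
    rw [RelIso.apply_symm_apply] at hcongr
    rw [← hcongr]
    rcases hh : ((Gr e).overFinIso hv).symm v with p | l
    · by_cases hp : isPi p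
      · rw [nbr_pt_pi hq7 e p hp, hcard]
        omega
      · rw [nbr_pt_nonpi e p hp, hcard]
    · rw [nbr_line e l, hcard]
  · rw [← girth_iso ((Gr e).overFinIso hv)]
    exact girth_Gr hq7 hcard e

end Cage7

/-- `cageNum k g` is `n(k,g)`, the minimum number of vertices of a `k`-regular graph of
girth `g` (the order of a `(k,g)`-cage). -/
noncomputable def cageNum (k g : ℕ) : ℕ :=
  sInf {n | ∃ G : SimpleGraph (Fin n),
    (∀ v, Nat.card (G.neighborSet v) = k) ∧ G.girth = g}

/-- For every prime power `q ≥ 7` there is a `q`-regular graph of girth exactly 7 on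
`2q³ − 2q` vertices; consequently `n(q,7) ≤ 2q³ − 2q`. -/
theorem exists_q_regular_girth_seven (q : ℕ) (hq : IsPrimePow q) (h7 : 7 ≤ q) :
    (∃ G : SimpleGraph (Fin (2 * q ^ 3 - 2 * q)),
      (∀ v, Nat.card (G.neighborSet v) = q) ∧ G.girth = 7) ∧
    cageNum q 7 ≤ 2 * q ^ 3 - 2 * q := by
  obtain ⟨p, n, hp, hn, hpn⟩ := hq
  haveI : Fact p.Prime := ⟨Nat.prime_iff.mpr hp⟩
  letI : Fintype (GaloisField p n) := Fintype.ofFinite _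
  letI : DecidableEq (GaloisField p n) := Classical.decEq _
  have hcard : Fintype.card (GaloisField p n) = q := by
    rw [← Nat.card_eq_fintype_card, GaloisField.card p n hn.ne', hpn]
  obtain ⟨G, h1, h2⟩ := Cage7.main h7 (GaloisField p n) hcard
  exact ⟨⟨G, h1, h2⟩, Nat.sInf_le ⟨G, h1, h2⟩⟩
end

section
/- In PG(3,q) with q even, equipped with the null polarity π defined by the bilinear form x₁y₀ + x₀y₁ + x₃y₂ + x₂y₃, let s ≠ t be nonzero elements of GF(q), let C = (1 : a : ta+k : 1/t), E = (1 : b : sb+m : 1/s), B = (1 : a+1 : ta+t+k : 1/t), F = (1 : b+1 : sb+s+m : 1/s) (in coordinates (x₀:x₁:x₂:x₃), with affine coordinates X = x₁/x₀, Y = x₂/x₀, Z = x₃/x₀). Then the lines CE and BF cannot both be self-conjugate (totally isotropic) with respect to π. -/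
/-- In `PG(3,q)` with `q` even (a finite field `K` of characteristic 2), equipped with
the null polarity given by the bilinear form `x₁y₀ + x₀y₁ + x₃y₂ + x₂y₃`, let `s ≠ t` be
nonzero elements of `K` and consider the points `C = (1 : a : ta+k : 1/t)`,
`E = (1 : b : sb+m : 1/s)`, `B = (1 : a+1 : ta+t+k : 1/t)`, `F = (1 : b+1 : sb+s+m : 1/s)`.
Then the lines `CE` and `BF` cannot both be self-conjugate (totally isotropic). -/
theorem lines_not_both_self_conjugate {K : Type*} [Field K] [Fintype K] [CharP K 2]
    (s t a b k m : K) (hs : s ≠ 0) (ht : t ≠ 0) (hst : s ≠ t) :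
    letI form : (Fin 4 → K) → (Fin 4 → K) → K :=
      fun x y => x 1 * y 0 + x 0 * y 1 + x 3 * y 2 + x 2 * y 3
    letI C : Fin 4 → K := ![1, a, t * a + k, t⁻¹]
    letI E : Fin 4 → K := ![1, b, s * b + m, s⁻¹]
    letI B : Fin 4 → K := ![1, a + 1, t * a + t + k, t⁻¹]
    letI F : Fin 4 → K := ![1, b + 1, s * b + s + m, s⁻¹]
    ¬ (form C E = 0 ∧ form B F = 0) := by
  intro ⟨h1, h2⟩
  simp only [Matrix.cons_val_zero, Matrix.cons_val_one, Matrix.head_cons,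
    Matrix.cons_val_two, Matrix.cons_val_three, Matrix.tail_cons] at h1 h2
  have h2c : (2 : K) = 0 := by
    have := CharP.cast_eq_zero K 2; simpa using this
  have key : (s - t) * (s - t) = 0 := by
    field_simp at h1 h2
    linear_combination h2 - h1 - 2 * s * t * h2c
  exact hst (sub_eq_zero.mp (mul_self_eq_zero.mp key))
end
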